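/- arXiv:2011.12877 — 7 statements merged into one kernel-verified Lean document; each statement's English description precedes it below -/
import Mathlib

section
/- Let β ∈ L^∞[0,∞) have a finite mean value β̄ := lim_{T→∞} (1/T)∫₀^T β(t) dt. Then for every f ∈ L¹[0,∞), lim_{N→∞} ∫₀^∞ β(Nt) f(t) dt = β̄ ∫₀^∞ f(t) dt. -/
/-!
Both sides of the limit are Lipschitz in `f` for the `L¹(0,∞)` distance, uniformly in `N`
(with constants `sup |β|` and `|β̄|`), so the set of `f` for which the limit holds is closed and
it suffices to check it on a dense class. For the indicator of `(a, b]` the substitution `s = N t`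
turns `∫ β(N t) dt` over `(a, b]` into `N⁻¹ ∫_{Na}^{Nb} β`, which tends to `β̄ (b - a)` by the
Cesàro hypothesis. Finite sums of such indicators approximate continuous compactly supported
functions uniformly on a bounded interval, and those are dense in `L¹(0,∞)`.
-/

open MeasureTheory Filter Set Topology

theorem tendsto_of_forall_approx {ι α : Type*} [PseudoMetricSpace α] {l : Filter ι}
    {a : ι → α} {y : α}
    (h : ∀ ε > 0, ∃ b : ι → α, ∃ z, Tendsto b l (𝓝 z) ∧ (∀ᶠ i in l, dist (a i) (b i) ≤ ε) ∧
      dist z y ≤ ε) :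
    Tendsto a l (𝓝 y) := by
  refine Metric.tendsto_nhds.2 fun ε hε => ?_
  obtain ⟨b, z, hb, hab, hzy⟩ := h (ε / 3) (by positivity)
  filter_upwards [Metric.tendsto_nhds.1 hb (ε / 3) (by positivity), hab] with i hbi hai
  calc dist (a i) y ≤ dist (a i) (b i) + dist (b i) z + dist z y := dist_triangle4 _ _ _ _
    _ < ε := by linarith

def HasRiemannLebesgueLimit (β : ℝ → ℝ) (βbar : ℝ) (f : ℝ → ℝ) : Prop :=
  Tendsto (fun N : ℝ => ∫ t in Ioi 0, β (N * t) * f t) atTop (𝓝 (βbar * ∫ t in Ioi 0, f t))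

section

variable {β : ℝ → ℝ} {βbar M : ℝ}

theorem integrableOn_comp_mul_mul (hβm : Measurable β) (hM : ∀ t, 0 ≤ t → |β t| ≤ M)
    {f : ℝ → ℝ} (hf : IntegrableOn f (Ioi 0)) {N : ℝ} (hN : 0 ≤ N) :
    IntegrableOn (fun t => β (N * t) * f t) (Ioi 0) :=
  hf.bdd_mul (hβm.comp (measurable_const_mul N)).aestronglyMeasurable <|
    (ae_restrict_mem measurableSet_Ioi).mono fun _ ht => hM _ (mul_nonneg hN ht.le)

theorem abs_setIntegral_comp_mul_mul_le (hM : ∀ t, 0 ≤ t → |β t| ≤ M)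
    {f : ℝ → ℝ} (hf : IntegrableOn f (Ioi 0)) {N : ℝ} (hN : 0 ≤ N) :
    |∫ t in Ioi 0, β (N * t) * f t| ≤ M * ∫ t in Ioi 0, |f t| := by
  rw [← integral_const_mul, ← Real.norm_eq_abs]
  refine norm_integral_le_of_norm_le (hf.abs.const_mul M) ?_
  filter_upwards [ae_restrict_mem measurableSet_Ioi] with t ht
  rw [norm_mul, Real.norm_eq_abs, Real.norm_eq_abs]
  exact mul_le_mul_of_nonneg_right (hM _ (mul_nonneg hN ht.le)) (abs_nonneg _)

theorem hasRiemannLebesgueLimit_of_approx (hβm : Measurable β) (hM : ∀ t, 0 ≤ t → |β t| ≤ M)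
    {f : ℝ → ℝ} (hf : IntegrableOn f (Ioi 0))
    (happrox : ∀ δ > 0, ∃ g, IntegrableOn g (Ioi 0) ∧ HasRiemannLebesgueLimit β βbar g ∧
      ∫ t in Ioi 0, |f t - g t| ≤ δ) :
    HasRiemannLebesgueLimit β βbar f := by
  have hM0 : 0 ≤ M := (abs_nonneg _).trans (hM 0 le_rfl)
  refine tendsto_of_forall_approx fun ε hε => ?_
  obtain ⟨g, hg, hgβ, hfg⟩ := happrox (ε / (M + |βbar| + 1)) (by positivity)
  have hd0 : 0 ≤ ∫ t in Ioi 0, |f t - g t| :=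
    setIntegral_nonneg measurableSet_Ioi fun t _ => abs_nonneg _
  have hdε : (∫ t in Ioi 0, |f t - g t|) * (M + |βbar| + 1) ≤ ε :=
    (le_div_iff₀ (by positivity)).1 hfg
  refine ⟨_, _, hgβ, ?_, ?_⟩
  · filter_upwards [eventually_ge_atTop 0] with N hN
    rw [Real.dist_eq, ← integral_sub (integrableOn_comp_mul_mul hβm hM hf hN)
      (integrableOn_comp_mul_mul hβm hM hg hN)]
    simp_rw [← mul_sub]
    refine (abs_setIntegral_comp_mul_mul_le (f := fun t => f t - g t) hM (hf.sub hg) hN).trans ?_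
    nlinarith [abs_nonneg βbar]
  · rw [Real.dist_eq, ← mul_sub, abs_mul, ← integral_sub hg hf]
    calc |βbar| * |∫ t in Ioi 0, g t - f t| ≤ |βbar| * ∫ t in Ioi 0, |g t - f t| := by
          gcongr
          exact abs_integral_le_integral_abs
      _ = |βbar| * ∫ t in Ioi 0, |f t - g t| := by simp_rw [abs_sub_comm]
      _ ≤ ε := by nlinarith

theorem tendsto_intervalIntegral_comp_mul
    (hmean : Tendsto (fun T : ℝ => (1 / T) * ∫ t in (0:ℝ)..T, β t) atTop (𝓝 βbar))
    {c : ℝ} (hc : 0 ≤ c) :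
    Tendsto (fun N : ℝ => ∫ t in (0:ℝ)..c, β (N * t)) atTop (𝓝 (c * βbar)) := by
  rcases hc.eq_or_lt with rfl | hc
  · simp
  refine ((hmean.comp (tendsto_id.atTop_mul_const hc)).const_mul c).congr' ?_
  filter_upwards [eventually_gt_atTop 0] with N hN
  rw [Function.comp_apply, intervalIntegral.integral_comp_mul_left β hN.ne', mul_zero,
    smul_eq_mul, id]
  field_simp

theorem intervalIntegrable_comp_mul (hβm : Measurable β) (hM : ∀ t, 0 ≤ t → |β t| ≤ M)
    {N b : ℝ} (hN : 0 ≤ N) (hb : 0 ≤ b) :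
    IntervalIntegrable (fun t => β (N * t)) volume 0 b := by
  refine (intervalIntegrable_const (c := M)).mono_fun'
    (hβm.comp (measurable_const_mul N)).aestronglyMeasurable ?_
  rw [uIoc_of_le hb]
  filter_upwards [ae_restrict_mem measurableSet_Ioc] with t ht
  exact hM _ (mul_nonneg hN ht.1.le)

theorem tendsto_setIntegral_Ioc_comp_mul (hβm : Measurable β) (hM : ∀ t, 0 ≤ t → |β t| ≤ M)
    (hmean : Tendsto (fun T : ℝ => (1 / T) * ∫ t in (0:ℝ)..T, β t) atTop (𝓝 βbar))
    {a b : ℝ} (ha : 0 ≤ a) (hab : a ≤ b) :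
    Tendsto (fun N : ℝ => ∫ t in Ioc a b, β (N * t)) atTop (𝓝 ((b - a) * βbar)) := by
  rw [sub_mul]
  refine ((tendsto_intervalIntegral_comp_mul hmean (ha.trans hab)).sub
    (tendsto_intervalIntegral_comp_mul hmean ha)).congr' ?_
  filter_upwards [eventually_ge_atTop 0] with N hN
  rw [intervalIntegral.integral_interval_sub_left
    (intervalIntegrable_comp_mul hβm hM hN (ha.trans hab))
    (intervalIntegrable_comp_mul hβm hM hN ha),
    intervalIntegral.integral_of_le hab]

theorem integrable_indicator_Ioc_const (a b c : ℝ) : Integrable ((Ioc a b).indicator fun _ => c) :=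
  (integrableOn_const measure_Ioc_lt_top.ne).integrable_indicator measurableSet_Ioc

theorem setIntegral_Ioi_mul_indicator_Ioc {a : ℝ} (ha : 0 ≤ a) (b : ℝ) (g : ℝ → ℝ) (c : ℝ) :
    ∫ t in Ioi 0, g t * (Ioc a b).indicator (fun _ => c) t = (∫ t in Ioc a b, g t) * c := by
  simp_rw [← indicator_mul_right]
  rw [integral_indicator measurableSet_Ioc, Measure.restrict_restrict measurableSet_Ioc,
    inter_eq_left.2 (show Ioc a b ⊆ Ioi 0 from fun _ ht => ha.trans_lt ht.1), integral_mul_const]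

theorem setIntegral_Ioi_indicator_Ioc {a b : ℝ} (ha : 0 ≤ a) (hab : a ≤ b) (c : ℝ) :
    ∫ t in Ioi 0, (Ioc a b).indicator (fun _ => c) t = (b - a) * c := by
  simpa [Real.volume_real_Ioc_of_le hab] using
    setIntegral_Ioi_mul_indicator_Ioc ha b (fun _ => 1) c

theorem hasRiemannLebesgueLimit_indicator_Ioc (hβm : Measurable β)
    (hM : ∀ t, 0 ≤ t → |β t| ≤ M)
    (hmean : Tendsto (fun T : ℝ => (1 / T) * ∫ t in (0:ℝ)..T, β t) atTop (𝓝 βbar))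
    {a b : ℝ} (ha : 0 ≤ a) (hab : a ≤ b) (c : ℝ) :
    HasRiemannLebesgueLimit β βbar ((Ioc a b).indicator fun _ => c) := by
  unfold HasRiemannLebesgueLimit
  simp_rw [setIntegral_Ioi_mul_indicator_Ioc ha, setIntegral_Ioi_indicator_Ioc ha hab]
  convert (tendsto_setIntegral_Ioc_comp_mul hβm hM hmean ha hab).mul_const c using 2
  ring

theorem hasRiemannLebesgueLimit_finsetSum (hβm : Measurable β) (hM : ∀ t, 0 ≤ t → |β t| ≤ M)
    {ι : Type*} (s : Finset ι) {f : ι → ℝ → ℝ} (hf : ∀ i ∈ s, IntegrableOn (f i) (Ioi 0))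
    (hlim : ∀ i ∈ s, HasRiemannLebesgueLimit β βbar (f i)) :
    HasRiemannLebesgueLimit β βbar (fun t => ∑ i ∈ s, f i t) := by
  unfold HasRiemannLebesgueLimit
  rw [integral_finsetSum s hf, Finset.mul_sum]
  refine (tendsto_finsetSum s hlim).congr' ?_
  filter_upwards [eventually_ge_atTop 0] with N hN
  simp_rw [Finset.mul_sum]
  rw [integral_finsetSum s fun i hi => integrableOn_comp_mul_mul hβm hM (hf i hi) hN]

noncomputable def stepFunction (h : ℝ) (m : ℤ) (c : ℤ → ℝ) (t : ℝ) : ℝ :=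
  ∑ j ∈ Finset.Icc 1 m, (Ioc ((j - 1) * h) (j * h)).indicator (fun _ => c j) t

theorem stepFunction_apply {h : ℝ} (hh : 0 < h) (m : ℤ) (c : ℤ → ℝ) (t : ℝ) :
    stepFunction h m c t = if ⌈t / h⌉ ∈ Finset.Icc 1 m then c ⌈t / h⌉ else 0 := by
  have hmem : ∀ j : ℤ, t ∈ Ioc ((j - 1) * h) (j * h) ↔ j = ⌈t / h⌉ := fun j => by
    rw [eq_comm, Int.ceil_eq_iff, mem_Ioc, lt_div_iff₀ hh, div_le_iff₀ hh]
  simp only [stepFunction, indicator_apply, hmem, Finset.sum_ite_eq']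

theorem integrable_stepFunction (h : ℝ) (m : ℤ) (c : ℤ → ℝ) : Integrable (stepFunction h m c) :=
  integrable_finsetSum _ fun j _ => integrable_indicator_Ioc_const _ _ (c j)

theorem hasRiemannLebesgueLimit_stepFunction (hβm : Measurable β)
    (hM : ∀ t, 0 ≤ t → |β t| ≤ M)
    (hmean : Tendsto (fun T : ℝ => (1 / T) * ∫ t in (0:ℝ)..T, β t) atTop (𝓝 βbar))
    {h : ℝ} (hh : 0 ≤ h) (m : ℤ) (c : ℤ → ℝ) :
    HasRiemannLebesgueLimit β βbar (stepFunction h m c) := by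
  refine hasRiemannLebesgueLimit_finsetSum hβm hM _
    (fun j _ => (integrable_indicator_Ioc_const _ _ (c j)).integrableOn) fun j hj => ?_
  have hj1 : (1 : ℝ) ≤ j := by exact_mod_cast (Finset.mem_Icc.1 hj).1
  exact hasRiemannLebesgueLimit_indicator_Ioc hβm hM hmean (by nlinarith) (by nlinarith) (c j)

theorem HasCompactSupport.exists_eq_zero_of_lt {E : Type*} [Zero E] {g : ℝ → E}
    (hgs : HasCompactSupport g) :
    ∃ R ≥ 0, ∀ t, R < t → g t = 0 := by
  obtain ⟨R, hR⟩ := hgs.isBounded.subset_closedBall 0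
  refine ⟨max R 0, le_max_right _ _, fun t ht => image_eq_zero_of_notMem_tsupport fun hmem => ?_⟩
  have := hR hmem
  rw [Metric.mem_closedBall, Real.dist_0_eq_abs] at this
  linarith [le_abs_self t, le_max_left R 0]

theorem ceil_div_mul_lt_add {h : ℝ} (hh : 0 < h) (x : ℝ) : (⌈x / h⌉ : ℝ) * h < x + h := by
  have := Int.ceil_lt_add_one (x / h)
  rwa [div_add_one hh.ne', lt_div_iff₀ hh] at this

theorem abs_sub_stepFunction_le {g : ℝ → ℝ} {R h δ η : ℝ} (hgR : ∀ t, R < t → g t = 0)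
    (hgδ : ∀ ⦃a b⦄, dist a b < δ → dist (g a) (g b) < η) (hh : 0 < h) (hhδ : h ≤ δ)
    {t : ℝ} (ht : 0 < t) :
    |g t - stepFunction h ⌈R / h⌉ (fun j => g (j * h)) t| ≤
      (Ioc 0 (R + h)).indicator (fun _ => η) t := by
  have hk1 : 1 ≤ ⌈t / h⌉ := Int.one_le_ceil_iff.2 (div_pos ht hh)
  have hk_lt := ceil_div_mul_lt_add hh t
  have hk_ge : t ≤ ⌈t / h⌉ * h := (div_le_iff₀ hh).1 (Int.le_ceil _)
  rw [stepFunction_apply hh]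
  split_ifs with hk
  · have hkR : (⌈t / h⌉ : ℝ) * h ≤ ⌈R / h⌉ * h :=
      mul_le_mul_of_nonneg_right (by exact_mod_cast (Finset.mem_Icc.1 hk).2) hh.le
    have htR : t ∈ Ioc 0 (R + h) := ⟨ht, by linarith [ceil_div_mul_lt_add hh R]⟩
    rw [indicator_of_mem htR, ← Real.dist_eq]
    refine (hgδ ?_).le
    rw [Real.dist_eq, abs_sub_lt_iff]
    constructor <;> linarith
  · have hRt : R < t := by
      by_contra! htR
      exact hk (Finset.mem_Icc.2 ⟨hk1, Int.ceil_le_ceil (by gcongr)⟩)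
    rw [hgR t hRt, sub_zero, abs_zero]
    have hη : 0 ≤ η :=
      dist_nonneg.trans (hgδ (a := t) (b := t) (by simpa using hh.trans_le hhδ)).le
    exact indicator_nonneg (fun _ _ => hη) t

theorem exists_stepFunction_integral_abs_sub_le {g : ℝ → ℝ} (hgc : Continuous g)
    (hgs : HasCompactSupport g) {ε : ℝ} (hε : 0 < ε) :
    ∃ h > 0, ∃ m : ℤ, ∫ t in Ioi 0, |g t - stepFunction h m (fun j => g (j * h)) t| ≤ ε := by
  obtain ⟨R, hR0, hgR⟩ := hgs.exists_eq_zero_of_lt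
  obtain ⟨δ, hδ, hgδ⟩ := Metric.uniformContinuous_iff.1
    (hgs.uniformContinuous_of_continuous hgc) (ε / (R + 1)) (by positivity)
  have hh : 0 < min δ 1 := lt_min hδ one_pos
  refine ⟨min δ 1, hh, ⌈R / min δ 1⌉, ?_⟩
  calc ∫ t in Ioi 0, |g t - stepFunction (min δ 1) ⌈R / min δ 1⌉ (fun j => g (j * min δ 1)) t|
      ≤ ∫ t in Ioi 0, (Ioc 0 (R + min δ 1)).indicator (fun _ => ε / (R + 1)) t :=
        integral_mono_of_nonneg (Eventually.of_forall fun _ => abs_nonneg _)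
          (integrable_indicator_Ioc_const _ _ _).integrableOn
          ((ae_restrict_mem measurableSet_Ioi).mono fun t ht =>
            abs_sub_stepFunction_le hgR hgδ hh (min_le_left δ 1) ht)
    _ = (R + min δ 1) * (ε / (R + 1)) := by
        rw [setIntegral_Ioi_indicator_Ioc le_rfl (by positivity), sub_zero]
    _ ≤ (R + 1) * (ε / (R + 1)) := by gcongr; exact min_le_right δ 1
    _ = ε := by field_simp

theorem Continuous.hasRiemannLebesgueLimit {g : ℝ → ℝ} (hgc : Continuous g)
    (hgs : HasCompactSupport g) (hβm : Measurable β) (hM : ∀ t, 0 ≤ t → |β t| ≤ M)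
    (hmean : Tendsto (fun T : ℝ => (1 / T) * ∫ t in (0:ℝ)..T, β t) atTop (𝓝 βbar)) :
    HasRiemannLebesgueLimit β βbar g := by
  refine hasRiemannLebesgueLimit_of_approx hβm hM
    (hgc.integrable_of_hasCompactSupport hgs).integrableOn fun δ hδ => ?_
  obtain ⟨h, hh, m, hgh⟩ := exists_stepFunction_integral_abs_sub_le hgc hgs hδ
  exact ⟨_, (integrable_stepFunction h m _).integrableOn,
    hasRiemannLebesgueLimit_stepFunction hβm hM hmean hh.le m _, hgh⟩

end

/-- Generalized Riemann–Lebesgue lemma: if `β ∈ L^∞[0,∞)` has Cesàro mean `βbar`,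
then for every `f ∈ L¹[0,∞)`, `∫₀^∞ β(Nt) f(t) dt → βbar ∫₀^∞ f`. -/
theorem generalized_riemann_lebesgue
    (β : ℝ → ℝ) (βbar : ℝ)
    (hβm : Measurable β)
    (hβb : ∃ M : ℝ, ∀ t : ℝ, 0 ≤ t → |β t| ≤ M)
    (hmean : Tendsto (fun T : ℝ => (1 / T) * ∫ t in (0:ℝ)..T, β t) atTop (nhds βbar))
    (f : ℝ → ℝ) (hf : IntegrableOn f (Set.Ioi (0:ℝ))) :
    Tendsto (fun N : ℝ => ∫ t in Set.Ioi (0:ℝ), β (N * t) * f t) atTop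
      (nhds (βbar * ∫ t in Set.Ioi (0:ℝ), f t)) := by
  obtain ⟨M, hM⟩ := hβb
  show HasRiemannLebesgueLimit β βbar f
  refine hasRiemannLebesgueLimit_of_approx hβm hM hf fun δ hδ => ?_
  obtain ⟨g, hgs, hfg, hgc, hgi⟩ := hf.exists_hasCompactSupport_integral_sub_le hδ
  exact ⟨g, hgi, hgc.hasRiemannLebesgueLimit hgs hβm hM hmean,
    by simpa only [Real.norm_eq_abs] using hfg⟩
end

section
/- Let β ∈ L^∞[0,∞) have mean value zero, i.e. lim_{T→∞} (1/T)∫₀^T β = 0. Then for every f ∈ L¹[0,∞), ∫₀^∞ β(Nt) f(t) dt → 0 as N → ∞. -/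
/-!
Writing `B T = ∫ t in 0..T, β t`, a change of variables gives
`∫ t in a..b, β (N * t) = N⁻¹ * (B (N * b) - B (N * a))`, which tends to zero by the mean-zero
hypothesis. So `∫ β (N * t) g t` tends to zero for step functions `g`, hence for continuous
compactly supported `g` (uniformly approximated by step functions on its support), hence for
every integrable `f` (approximated in `L¹` by such `g`). Both approximations change the integral
by at most `M` times the `L¹` error, uniformly in `N`, where `M` bounds `|β|` on `[0, ∞)`.
-/

open MeasureTheory Filter Set Topology

theorem tendsto_nhds_zero_of_forall_approx {ι E : Type*} [SeminormedAddCommGroup E]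
    {l : Filter ι} {F : ι → E} (C : ℝ)
    (h : ∀ ε > 0, ∃ G : ι → E, Tendsto G l (𝓝 0) ∧ ∀ᶠ i in l, ‖F i - G i‖ ≤ C * ε) :
    Tendsto F l (𝓝 0) := by
  rw [NormedAddGroup.tendsto_nhds_zero]
  intro ε hε
  obtain ⟨G, hG, hFG⟩ := h (ε / (2 * (|C| + 1))) (by positivity)
  have hCε : C * (ε / (2 * (|C| + 1))) < ε / 2 := by
    rw [mul_div_assoc', div_lt_div_iff₀ (by positivity) two_pos]
    nlinarith [le_abs_self C]
  filter_upwards [hFG, NormedAddGroup.tendsto_nhds_zero.1 hG (ε / 2) (half_pos hε)]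
    with i hFGi hGi
  linarith [norm_le_norm_sub_add (F i) (G i)]

theorem intervalIntegrable_of_abs_le {φ : ℝ → ℝ} {a b M : ℝ} (hφ : Measurable φ)
    (hM : ∀ t ∈ uIoc a b, |φ t| ≤ M) : IntervalIntegrable φ volume a b := by
  rw [intervalIntegrable_iff]
  exact Measure.integrableOn_of_bounded measure_Ioc_lt_top.ne hφ.aestronglyMeasurable
    ((ae_restrict_iff' measurableSet_uIoc).2 (ae_of_all _ hM))

theorem setIntegral_Ioi_eq_intervalIntegral_of_eq_zero {E : Type*} [NormedAddCommGroup E]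
    [NormedSpace ℝ E] {h : ℝ → E} {a R : ℝ} (haR : a ≤ R) (hR : ∀ t, R < t → h t = 0) :
    ∫ t in Ioi a, h t = ∫ t in a..R, h t := by
  rw [intervalIntegral.integral_of_le haR]
  exact setIntegral_eq_of_subset_of_forall_sdiff_eq_zero measurableSet_Ioi Ioc_subset_Ioi_self
    fun t ht => hR t (not_le.1 fun htR => ht.2 ⟨ht.1, htR⟩)

theorem norm_intervalIntegral_mul_sub_mul_le {φ g : ℝ → ℝ} {a b M ε : ℝ}
    (hφ : IntervalIntegrable φ volume a b) (hg : ContinuousOn g (uIcc a b))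
    (hφM : ∀ t ∈ uIoc a b, |φ t| ≤ M) (hgε : ∀ t ∈ uIoc a b, |g t - g a| ≤ ε) :
    ‖(∫ t in a..b, φ t * g t) - g a * ∫ t in a..b, φ t‖ ≤ M * ε * |b - a| := by
  rw [← intervalIntegral.integral_const_mul,
    ← intervalIntegral.integral_sub (hφ.mul_continuousOn hg) (hφ.const_mul _)]
  refine intervalIntegral.norm_integral_le_of_norm_le_const fun t ht => ?_
  calc ‖φ t * g t - g a * φ t‖ = |φ t| * |g t - g a| := by
        rw [Real.norm_eq_abs, ← abs_mul, mul_sub, mul_comm (g a)]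
    _ ≤ M * ε := mul_le_mul (hφM t ht) (hgε t ht) (abs_nonneg _)
        ((abs_nonneg _).trans (hφM t ht))

theorem norm_intervalIntegral_mul_sub_riemannSum_le {φ g : ℝ → ℝ} {M ε d : ℝ} (K : ℕ)
    (hφm : Measurable φ) (hφM : ∀ t, 0 < t → |φ t| ≤ M) (hg : Continuous g)
    (hd : 0 < d) (hgε : ∀ s t, s ≤ t → t ≤ s + d → |g t - g s| ≤ ε) :
    ‖(∫ t in 0..K * d, φ t * g t)
        - ∑ k ∈ Finset.range K, g (k * d) * ∫ t in k * d..(k + 1) * d, φ t‖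
      ≤ M * ε * (K * d) := by
  have hpiece : ∀ k : ℕ, uIoc (k * d) ((k + 1) * d) = Ioc (k * d) (k * d + d) := fun k => by
    rw [uIoc_of_le (by gcongr; linarith), add_one_mul]
  have hφk : ∀ k : ℕ, ∀ t ∈ uIoc (k * d) ((k + 1) * d), |φ t| ≤ M := fun k t ht =>
    hφM t ((by positivity : (0 : ℝ) ≤ k * d).trans_lt (hpiece k ▸ ht).1)
  have hint : ∀ k : ℕ, IntervalIntegrable φ volume (k * d) ((k + 1) * d) := fun k =>
    intervalIntegrable_of_abs_le hφm (hφk k)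
  have hsplit := intervalIntegral.sum_integral_adjacent_intervals (a := fun k : ℕ => k * d)
    (n := K) fun k _ => by push_cast; exact (hint k).mul_continuousOn hg.continuousOn
  push_cast [zero_mul] at hsplit
  rw [← hsplit, ← Finset.sum_sub_distrib]
  calc _ ≤ ∑ k ∈ Finset.range K, ‖(∫ t in k * d..(k + 1) * d, φ t * g t)
          - g (k * d) * ∫ t in k * d..(k + 1) * d, φ t‖ := norm_sum_le _ _
    _ ≤ ∑ _k ∈ Finset.range K, M * ε * d := by
        refine Finset.sum_le_sum fun k _ => ?_
        refine (norm_intervalIntegral_mul_sub_mul_le (hint k) hg.continuousOn (hφk k)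
          fun t ht => ?_).trans_eq (by rw [add_one_mul, add_sub_cancel_left, abs_of_pos hd])
        rw [hpiece] at ht
        exact hgε _ _ ht.1.le ht.2
    _ = M * ε * (K * d) := by rw [Finset.sum_const, Finset.card_range, nsmul_eq_mul]; ring

section BoundedFamily

variable {ι : Type*} {l : Filter ι} {φ : ι → ℝ → ℝ} {M : ℝ}

theorem tendsto_setIntegral_mul_of_continuous (hφm : ∀ i, Measurable (φ i))
    (hφM : ∀ᶠ i in l, ∀ t, 0 < t → |φ i t| ≤ M)
    (hφ : ∀ a b, 0 ≤ a → a ≤ b → Tendsto (fun i => ∫ t in a..b, φ i t) l (𝓝 0))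
    {g : ℝ → ℝ} (hgc : Continuous g) (hgs : HasCompactSupport g) :
    Tendsto (fun i => ∫ t in Ioi 0, φ i t * g t) l (𝓝 0) := by
  obtain ⟨R, hR, hgR⟩ := hgs.exists_pos_le_norm
  refine tendsto_nhds_zero_of_forall_approx (M * R) fun ε hε => ?_
  obtain ⟨δ, hδ, hgδ⟩ := Metric.uniformContinuous_iff.1
    (hgc.uniformContinuous_of_tendsto_cocompact hgs.is_zero_at_infty) ε hε
  obtain ⟨K, hK⟩ := exists_nat_gt (R / δ)
  have hK0 : (0 : ℝ) < K := (div_pos hR hδ).trans hK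
  set d := R / K with hd
  have hd0 : 0 < d := div_pos hR hK0
  have hKd : K * d = R := by rw [hd]; field_simp
  have hdδ : d < δ := by rwa [hd, div_lt_iff₀ hK0, mul_comm, ← div_lt_iff₀ hδ]
  refine ⟨fun i => ∑ k ∈ Finset.range K, g (k * d) * ∫ t in k * d..(k + 1) * d, φ i t, ?_, ?_⟩
  · simpa using tendsto_finsetSum (Finset.range K) fun k _ =>
      (hφ _ _ (by positivity) (by gcongr; linarith)).const_mul (g (k * d))
  filter_upwards [hφM] with i hi
  have hsum := norm_intervalIntegral_mul_sub_riemannSum_le K (hφm i) hi hgc hd0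
    fun s t hst hts => (hgδ (by rw [Real.dist_eq, abs_of_nonneg (sub_nonneg.2 hst)]; linarith)).le
  rw [hKd] at hsum
  rw [setIntegral_Ioi_eq_intervalIntegral_of_eq_zero hR.le fun t hRt => by
    rw [hgR t ((Real.le_norm_self t).trans' hRt.le), mul_zero]]
  exact hsum.trans_eq (by ring)

theorem tendsto_setIntegral_mul_of_integrableOn (hφm : ∀ i, Measurable (φ i))
    (hφM : ∀ᶠ i in l, ∀ t, 0 < t → |φ i t| ≤ M)
    (hφ : ∀ a b, 0 ≤ a → a ≤ b → Tendsto (fun i => ∫ t in a..b, φ i t) l (𝓝 0))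
    {f : ℝ → ℝ} (hf : IntegrableOn f (Ioi 0)) :
    Tendsto (fun i => ∫ t in Ioi 0, φ i t * f t) l (𝓝 0) := by
  refine tendsto_nhds_zero_of_forall_approx M fun ε hε => ?_
  obtain ⟨g, hgs, hfg, hgc, hg⟩ := Integrable.exists_hasCompactSupport_integral_sub_le hf hε
  refine ⟨_, tendsto_setIntegral_mul_of_continuous hφm hφM hφ hgc hgs, ?_⟩
  filter_upwards [hφM] with i hi
  have hiM : ∀ᵐ t ∂volume.restrict (Ioi 0), ‖φ i t‖ ≤ M :=
    (ae_restrict_iff' measurableSet_Ioi).2 (ae_of_all _ hi)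
  rw [← integral_sub (hf.bdd_mul (hφm i).aestronglyMeasurable hiM)
    (hg.bdd_mul (hφm i).aestronglyMeasurable hiM)]
  calc _ ≤ ∫ t in Ioi 0, M * ‖f t - g t‖ := by
        refine norm_integral_le_of_norm_le ((hf.sub hg).norm.const_mul M) ?_
        filter_upwards [hiM] with t ht
        rw [← mul_sub, norm_mul]
        exact mul_le_mul_of_nonneg_right ht (norm_nonneg _)
    _ ≤ M * ε := by
        rw [integral_const_mul]
        exact mul_le_mul_of_nonneg_left hfg ((abs_nonneg _).trans (hi 1 one_pos))

end BoundedFamily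

theorem tendsto_inv_mul_intervalIntegral_mul_of_mean_zero {β : ℝ → ℝ}
    (hmean : Tendsto (fun T : ℝ => (1 / T) * ∫ t in (0:ℝ)..T, β t) atTop (𝓝 0))
    {c : ℝ} (hc : 0 ≤ c) :
    Tendsto (fun N : ℝ => N⁻¹ * ∫ t in (0:ℝ)..N * c, β t) atTop (𝓝 0) := by
  rcases hc.eq_or_lt with rfl | hc
  · simp
  have h := (hmean.comp (tendsto_id.atTop_mul_const hc)).const_mul c
  rw [mul_zero] at h
  refine h.congr' ?_
  filter_upwards [eventually_gt_atTop 0] with N hN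
  simp only [Function.comp_apply, id]
  field_simp

theorem tendsto_intervalIntegral_comp_mul_of_mean_zero {β : ℝ → ℝ} {M : ℝ} (hβm : Measurable β)
    (hβM : ∀ t, 0 ≤ t → |β t| ≤ M)
    (hmean : Tendsto (fun T : ℝ => (1 / T) * ∫ t in (0:ℝ)..T, β t) atTop (𝓝 0))
    {a b : ℝ} (ha : 0 ≤ a) (hb : 0 ≤ b) :
    Tendsto (fun N : ℝ => ∫ t in a..b, β (N * t)) atTop (𝓝 0) := by
  have h := (tendsto_inv_mul_intervalIntegral_mul_of_mean_zero hmean hb).sub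
    (tendsto_inv_mul_intervalIntegral_mul_of_mean_zero hmean ha)
  rw [sub_zero] at h
  refine h.congr' ?_
  filter_upwards [eventually_gt_atTop 0] with N hN
  have hint : ∀ x, 0 ≤ x → IntervalIntegrable β volume 0 (N * x) := fun x hx =>
    intervalIntegrable_of_abs_le hβm fun t ht =>
      hβM t (uIoc_of_le (by positivity : 0 ≤ N * x) ▸ ht).1.le
  rw [← mul_sub, intervalIntegral.integral_interval_sub_left (hint b hb) (hint a ha),
    intervalIntegral.integral_comp_mul_left β hN.ne', smul_eq_mul]

/-- Zero-mean case of the generalized Riemann–Lebesgue lemma. -/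
theorem riemann_lebesgue_zero_mean
    (β : ℝ → ℝ)
    (hβm : Measurable β)
    (hβb : ∃ M : ℝ, ∀ t : ℝ, 0 ≤ t → |β t| ≤ M)
    (hmean : Tendsto (fun T : ℝ => (1 / T) * ∫ t in (0:ℝ)..T, β t) atTop (nhds 0))
    (f : ℝ → ℝ) (hf : IntegrableOn f (Set.Ioi (0:ℝ))) :
    Tendsto (fun N : ℝ => ∫ t in Set.Ioi (0:ℝ), β (N * t) * f t) atTop (nhds 0) := by
  obtain ⟨M, hβM⟩ := hβb
  refine tendsto_setIntegral_mul_of_integrableOn (M := M)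
    (fun N => hβm.comp (measurable_const_mul N)) ?_
    (fun a b ha hab => tendsto_intervalIntegral_comp_mul_of_mean_zero hβm hβM hmean ha
      (ha.trans hab)) hf
  filter_upwards [eventually_ge_atTop 0] with N hN t ht
  exact hβM _ (mul_nonneg hN ht.le)
end

section
/- Let f ∈ L¹[a,b] with F a primitive of f (F(x) = F(a) + ∫_a^x f), and let g : [a,b] → ℝ be piecewise absolutely continuous with respect to a partition a = x₀ < x₁ < ⋯ < x_m = b, meaning g restricted to each open subinterval extends to an absolutely continuous function on [x_i, x_{i+1}] with one-sided limits g(x_i⁺), g(x_{i+1}⁻). Then ∫_a^b f(σ) g(σ) dσ = Σ_{i=0}^{m-1} [F(x_{i+1}) g(x_{i+1}⁻) − F(x_i) g(x_i⁺)] − ∫_a^b F(σ) g'(σ) dσ, where g' denotes the almost-everywhere derivative of g. -/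
/-!
On each piece `[xᵢ, xᵢ₊₁]`, `g` agrees off the endpoints with the absolutely continuous function
`gp i + ∫ g'`, and `F` is absolutely continuous as well; their a.e. derivatives are `g'` and `f`,
so integration by parts for absolutely continuous functions applies on every piece. Summing over
the pieces gives the formula, the jumps of `g` appearing through the endpoint terms.
-/

open MeasureTheory Set Interval

theorem monotoneOn_nat_Iic_of_le_succ {α : Type*} [Preorder α] {x : ℕ → α} {m : ℕ}
    (hx : ∀ i < m, x i ≤ x (i + 1)) : MonotoneOn x (Iic m) := by
  intro i _ j hj hij
  induction j, hij using Nat.le_induction with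
  | base => exact le_rfl
  | succ j _ ih => exact (ih (Nat.le_of_succ_le hj)).trans (hx j hj)

namespace IntervalIntegrable

variable {f : ℝ → ℝ} {a b : ℝ}

theorem absolutelyContinuousOnInterval_const_add_integral (hf : IntervalIntegrable f volume a b)
    (C : ℝ) : AbsolutelyContinuousOnInterval (fun x ↦ C + ∫ t in a..x, f t) a b :=
  (LipschitzWith.const C).lipschitzOnWith.absolutelyContinuousOnInterval.add
    (hf.absolutelyContinuousOnInterval_intervalIntegral left_mem_uIcc)

theorem ae_deriv_const_add_integral (hf : IntervalIntegrable f volume a b) (C : ℝ) :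
    ∀ᵐ x, x ∈ Ι a b → deriv (fun x ↦ C + ∫ t in a..x, f t) x = f x := by
  filter_upwards [hf.ae_hasDerivAt_integral] with x hx hxab
  exact ((hx (uIoc_subset_uIcc hxab) a left_mem_uIcc).const_add C).deriv

end IntervalIntegrable

theorem intervalIntegral.integral_mul_const_add_integral {f g : ℝ → ℝ} {a b : ℝ}
    (hf : IntervalIntegrable f volume a b) (hg : IntervalIntegrable g volume a b) (F₀ G₀ : ℝ) :
    ∫ x in a..b, f x * (G₀ + ∫ t in a..x, g t) =
      (F₀ + ∫ t in a..b, f t) * (G₀ + ∫ t in a..b, g t) - F₀ * G₀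
        - ∫ x in a..b, (F₀ + ∫ t in a..x, f t) * g x := by
  set F := fun x ↦ F₀ + ∫ t in a..x, f t
  set G := fun x ↦ G₀ + ∫ t in a..x, g t
  have hF := hf.absolutelyContinuousOnInterval_const_add_integral F₀
  have hG := hg.absolutelyContinuousOnInterval_const_add_integral G₀
  have hprod : ∫ x in a..b, f x * G x + F x * g x = F b * G b - F a * G a := by
    rw [← hF.integral_deriv_mul_eq_sub hG]
    refine intervalIntegral.integral_congr_ae ?_
    filter_upwards [hf.ae_deriv_const_add_integral F₀, hg.ae_deriv_const_add_integral G₀]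
      with x hfx hgx hx
    rw [hfx hx, hgx hx]
  rw [intervalIntegral.integral_add (hf.mul_continuousOn hG.continuousOn)
    (hg.continuousOn_mul hF.continuousOn)] at hprod
  simp only [F, G, intervalIntegral.integral_same, add_zero] at hprod
  linarith

theorem eq_add_integral_of_forall_eq_add_integral {f F : ℝ → ℝ} {a b c : ℝ}
    (hf : IntegrableOn f (Icc a b)) (hF : ∀ y ∈ Icc a b, F y = F a + ∫ t in a..y, f t)
    (hc : c ∈ Icc a b) {y : ℝ} (hy : y ∈ Icc a b) : F y = F c + ∫ t in c..y, f t := by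
  have hf' : IntervalIntegrable f volume a b :=
    (intervalIntegrable_iff_integrableOn_Icc_of_le (hc.1.trans hc.2)).2 hf
  have hsub : ∀ z ∈ Icc a b, uIcc a z ⊆ uIcc a b := fun z hz ↦
    uIcc_subset_uIcc left_mem_uIcc (Icc_subset_uIcc hz)
  rw [hF y hy, hF c hc, ← intervalIntegral.integral_interval_sub_left
    (hf'.mono_set (hsub y hy)) (hf'.mono_set (hsub c hc))]
  ring

section Piece

variable {f F g g' : ℝ → ℝ} {c d G₀ : ℝ}

theorem continuousOn_of_forall_eq_add_integral (hcd : c ≤ d)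
    (hf : IntervalIntegrable f volume c d) (hF : ∀ y ∈ Icc c d, F y = F c + ∫ t in c..y, f t) :
    ContinuousOn F (uIcc c d) :=
  (hf.absolutelyContinuousOnInterval_const_add_integral (F c)).continuousOn.congr fun y hy ↦
    hF y (uIcc_of_le hcd ▸ hy)

theorem intervalIntegrable_mul_of_eqOn_Ioo (hcd : c ≤ d) (hf : IntervalIntegrable f volume c d)
    (hg' : IntervalIntegrable g' volume c d) (hg : ∀ y ∈ Ioo c d, g y = G₀ + ∫ t in c..y, g' t) :
    IntervalIntegrable (fun x ↦ f x * g x) volume c d :=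
  (hf.mul_continuousOn (hg'.absolutelyContinuousOnInterval_const_add_integral G₀).continuousOn)
    |>.congr_uIoo fun y hy ↦ by rw [hg y (uIoo_of_le hcd ▸ hy)]

theorem integral_mul_eq_sub_of_eqOn_Ioo (hcd : c ≤ d) (hf : IntervalIntegrable f volume c d)
    (hg' : IntervalIntegrable g' volume c d) (hF : ∀ y ∈ Icc c d, F y = F c + ∫ t in c..y, f t)
    (hg : ∀ y ∈ Ioo c d, g y = G₀ + ∫ t in c..y, g' t) :
    ∫ x in c..d, f x * g x =
      F d * (G₀ + ∫ t in c..d, g' t) - F c * G₀ - ∫ x in c..d, F x * g' x := by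
  have hFg' : ∫ x in c..d, F x * g' x = ∫ x in c..d, (F c + ∫ t in c..x, f t) * g' x :=
    intervalIntegral.integral_congr fun y hy ↦ by rw [hF y (uIcc_of_le hcd ▸ hy)]
  rw [hF d (right_mem_Icc.2 hcd), hFg', ← intervalIntegral.integral_mul_const_add_integral hf hg']
  exact intervalIntegral.integral_congr_Ioo_of_le hcd fun y hy ↦ by rw [hg y hy]

end Piece

/-- `gp i` and `gm (i + 1)` stand for the one-sided limits `g(xᵢ⁺)` and `g(xᵢ₊₁⁻)`. -/
theorem ibp_piecewise_AC_general
    (a b : ℝ) (m : ℕ)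
    (x : ℕ → ℝ) (hx0 : x 0 = a) (hxm : x m = b)
    (hxmono : ∀ i < m, x i < x (i + 1))
    (f F g g' : ℝ → ℝ) (gp gm : ℕ → ℝ)
    (hf : IntegrableOn f (Set.Icc a b))
    (hF : ∀ y ∈ Set.Icc a b, F y = F a + ∫ σ in a..y, f σ)
    (hg' : IntegrableOn g' (Set.Icc a b))
    (hpiece : ∀ i < m, ∀ y ∈ Set.Ioo (x i) (x (i + 1)),
        g y = gp i + ∫ σ in (x i)..y, g' σ)
    (hgm : ∀ i < m, gm (i + 1) = gp i + ∫ σ in (x i)..(x (i + 1)), g' σ) :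
    ∫ σ in a..b, f σ * g σ =
      (∑ i ∈ Finset.range m, (F (x (i + 1)) * gm (i + 1) - F (x i) * gp i))
        - ∫ σ in a..b, F σ * g' σ := by
  have hle : ∀ i < m, x i ≤ x (i + 1) := fun i hi ↦ (hxmono i hi).le
  have hmono := monotoneOn_nat_Iic_of_le_succ hle
  have hmem : ∀ i ≤ m, x i ∈ Icc a b := fun i hi ↦ hx0 ▸ hxm ▸
    ⟨hmono (Nat.zero_le m) hi (Nat.zero_le i), hmono hi (mem_Iic.2 le_rfl) hi⟩
  have hsub : ∀ i < m, Icc (x i) (x (i + 1)) ⊆ Icc a b := fun i hi ↦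
    Icc_subset_Icc (hmem i hi.le).1 (hmem (i + 1) hi).2
  have hint : ∀ {h : ℝ → ℝ}, IntegrableOn h (Icc a b) →
      ∀ i < m, IntervalIntegrable h volume (x i) (x (i + 1)) := fun hh i hi ↦
    (intervalIntegrable_iff_integrableOn_Icc_of_le (hle i hi)).2 (hh.mono_set (hsub i hi))
  have hFi : ∀ i < m, ∀ y ∈ Icc (x i) (x (i + 1)), F y = F (x i) + ∫ t in (x i)..y, f t :=
    fun i hi y hy ↦ eq_add_integral_of_forall_eq_add_integral hf hF (hmem i hi.le) (hsub i hi hy)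
  rw [← hx0, ← hxm, ← intervalIntegral.sum_integral_adjacent_intervals fun i hi ↦
      intervalIntegrable_mul_of_eqOn_Ioo (hle i hi) (hint hf i hi) (hint hg' i hi) (hpiece i hi),
    ← intervalIntegral.sum_integral_adjacent_intervals fun i hi ↦
      (hint hg' i hi).continuousOn_mul
        (continuousOn_of_forall_eq_add_integral (hle i hi) (hint hf i hi) (hFi i hi)),
    ← Finset.sum_sub_distrib]
  refine Finset.sum_congr rfl fun i hi ↦ ?_
  rw [Finset.mem_range] at hi
  rw [hgm i hi, integral_mul_eq_sub_of_eqOn_Ioo (hle i hi) (hint hf i hi) (hint hg' i hi)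
    (hFi i hi) (hpiece i hi)]

/-- Integration by parts for a piecewise absolutely continuous function `g`
(with one-sided values `gp i = g(xᵢ⁺)`, `gm (i+1) = g(x_{i+1}⁻)`) against an
integrable `f` with primitive `F`. -/
theorem ibp_piecewise_AC
    (a b : ℝ) (hab : a < b) (m : ℕ) (hm : 0 < m)
    (x : ℕ → ℝ) (hx0 : x 0 = a) (hxm : x m = b)
    (hxmono : ∀ i < m, x i < x (i + 1))
    (f F g g' : ℝ → ℝ) (gp gm : ℕ → ℝ)
    (hf : IntegrableOn f (Set.Icc a b))
    (hF : ∀ y ∈ Set.Icc a b, F y = F a + ∫ σ in a..y, f σ)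
    (hg' : IntegrableOn g' (Set.Icc a b))
    (hpiece : ∀ i < m, ∀ y ∈ Set.Ioo (x i) (x (i + 1)),
        g y = gp i + ∫ σ in (x i)..y, g' σ)
    (hgm : ∀ i < m, gm (i + 1) = gp i + ∫ σ in (x i)..(x (i + 1)), g' σ) :
    ∫ σ in a..b, f σ * g σ =
      (∑ i ∈ Finset.range m, (F (x (i + 1)) * gm (i + 1) - F (x i) * gp i))
        - ∫ σ in a..b, F σ * g' σ :=
  ibp_piecewise_AC_general a b m x hx0 hxm hxmono f F g g' gp gm hf hF hg' hpiece hgm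
end

section
/- Let β ∈ L^∞[0,∞) admit bounded zero-Cesàro-mean iterated primitives β⁽⁻¹⁾ and β⁽⁻²⁾. Let K : ℝ → ℝ be C² with support in [0,k] and K(0)=K(k)=K'(0)=K'(k)=0, and let s : ℝ → ℝ be piecewise AC¹ (differentiable with piecewise absolutely continuous derivative, finitely many jump points of s' in any bounded interval). Then for each fixed t ≥ 0, I_N(t) := ∫_ℝ β(Nσ) s(σ) K(t−σ) dσ = O(1/N²), i.e. there is a constant C (independent of N) with |I_N(t)| ≤ C/N² for all N ≥ 1. -/
/-!
Two integrations by parts on `[t - k, t]` turn `∫ β(Nσ) f(σ) dσ`, with `f = s · K(t - ·)`, into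
`∫ f''(σ) B₂(Nσ) / N² dσ`: the boundary terms vanish because `K` and `K'` vanish at `0` and `k`,
and `B₂` is bounded. Integration by parts is needed only for indefinite integrals of locally
integrable functions, which are absolutely continuous. That `s'` is such an indefinite integral
on all of `ℝ` follows by splitting any interval at the finitely many jump points it contains.
-/

open MeasureTheory Filter Set

/-- `U` is an indefinite Lebesgue integral of `u` on the whole real line. -/
structure IsPrimitiveOf (U u : ℝ → ℝ) : Prop where
  intervalIntegrable : ∀ a b, IntervalIntegrable u volume a b
  integral_eq_sub : ∀ a b, ∫ x in a..b, u x = U b - U a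

namespace IsPrimitiveOf

variable {U u V v : ℝ → ℝ}

theorem eq_add_integral (h : IsPrimitiveOf U u) (a : ℝ) :
    U = fun x => U a + ∫ y in a..x, u y := by
  funext x
  rw [h.integral_eq_sub]
  ring

theorem of_eq_add_integral (hu : ∀ a b, IntervalIntegrable u volume a b) (c : ℝ)
    (hU : ∀ x, U x = U c + ∫ y in c..x, u y) : IsPrimitiveOf U u where
  intervalIntegrable := hu
  integral_eq_sub a b := by
    rw [hU a, hU b, ← intervalIntegral.integral_interval_sub_left (hu c b) (hu c a)]
    ring

theorem continuous (h : IsPrimitiveOf U u) : Continuous U := by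
  rw [h.eq_add_integral 0]
  exact continuous_const.add (intervalIntegral.continuous_primitive h.intervalIntegrable 0)

theorem absolutelyContinuousOnInterval (h : IsPrimitiveOf U u) (a b : ℝ) :
    AbsolutelyContinuousOnInterval U a b := by
  rw [h.eq_add_integral a]
  exact contDiffOn_const.absolutelyContinuousOnInterval.add
    ((h.intervalIntegrable a b).absolutelyContinuousOnInterval_intervalIntegral left_mem_uIcc)

theorem ae_hasDerivAt (h : IsPrimitiveOf U u) (a b : ℝ) :
    ∀ᵐ x, x ∈ uIcc a b → HasDerivAt U (u x) x := by
  rw [h.eq_add_integral a]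
  filter_upwards [(h.intervalIntegrable a b).ae_hasDerivAt_integral] with x hx hxab
  exact (hx hxab a left_mem_uIcc).const_add _

theorem add (hU : IsPrimitiveOf U u) (hV : IsPrimitiveOf V v) :
    IsPrimitiveOf (fun x => U x + V x) (fun x => u x + v x) where
  intervalIntegrable a b := (hU.intervalIntegrable a b).add (hV.intervalIntegrable a b)
  integral_eq_sub a b := by
    rw [intervalIntegral.integral_add (hU.intervalIntegrable a b) (hV.intervalIntegrable a b),
      hU.integral_eq_sub, hV.integral_eq_sub]
    ring

theorem neg (h : IsPrimitiveOf U u) : IsPrimitiveOf (fun x => -U x) (fun x => -u x) where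
  intervalIntegrable a b := (h.intervalIntegrable a b).neg
  integral_eq_sub a b := by
    rw [intervalIntegral.integral_neg, h.integral_eq_sub]
    ring

theorem div_const (h : IsPrimitiveOf U u) (c : ℝ) :
    IsPrimitiveOf (fun x => U x / c) (fun x => u x / c) where
  intervalIntegrable a b := (h.intervalIntegrable a b).div_const c
  integral_eq_sub a b := by
    rw [intervalIntegral.integral_div, h.integral_eq_sub, sub_div]

theorem comp_mul_left (h : IsPrimitiveOf U u) {c : ℝ} (hc : c ≠ 0) :
    IsPrimitiveOf (fun x => U (c * x) / c) (fun x => u (c * x)) where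
  intervalIntegrable a b := by
    simpa [hc] using (h.intervalIntegrable (c * a) (c * b)).comp_mul_left (c := c)
  integral_eq_sub a b := by
    rw [intervalIntegral.integral_comp_mul_left _ hc, h.integral_eq_sub, smul_eq_mul]
    field_simp

theorem comp_sub_left (h : IsPrimitiveOf U u) (c : ℝ) :
    IsPrimitiveOf (fun x => U (c - x)) (fun x => -u (c - x)) where
  intervalIntegrable a b := by
    have := (h.intervalIntegrable (c - a) (c - b)).comp_sub_left c
    simp only [sub_sub_cancel] at this
    exact this.neg
  integral_eq_sub a b := by
    rw [intervalIntegral.integral_neg, intervalIntegral.integral_comp_sub_left, h.integral_eq_sub]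
    ring

theorem mul (hU : IsPrimitiveOf U u) (hV : IsPrimitiveOf V v) :
    IsPrimitiveOf (fun x => U x * V x) (fun x => u x * V x + U x * v x) where
  intervalIntegrable a b :=
    ((hU.intervalIntegrable a b).mul_continuousOn hV.continuous.continuousOn).add
      ((hV.intervalIntegrable a b).continuousOn_mul hU.continuous.continuousOn)
  integral_eq_sub a b := by
    rw [← (hU.absolutelyContinuousOnInterval a b).integral_deriv_mul_eq_sub
      (hV.absolutelyContinuousOnInterval a b)]
    refine intervalIntegral.integral_congr_ae ?_
    filter_upwards [hU.ae_hasDerivAt a b, hV.ae_hasDerivAt a b] with x hUx hVx hx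
    rw [(hUx (uIoc_subset_uIcc hx)).deriv, (hVx (uIoc_subset_uIcc hx)).deriv]

theorem integral_mul_eq (hU : IsPrimitiveOf U u) (hV : IsPrimitiveOf V v) (a b : ℝ) :
    ∫ x in a..b, U x * v x = U b * V b - U a * V a - ∫ x in a..b, u x * V x := by
  have := (hU.mul hV).integral_eq_sub a b
  rw [intervalIntegral.integral_add
    ((hU.intervalIntegrable a b).mul_continuousOn hV.continuous.continuousOn)
    ((hV.intervalIntegrable a b).continuousOn_mul hU.continuous.continuousOn)] at this
  linarith

end IsPrimitiveOf

theorem ContDiff.isPrimitiveOf_deriv {K : ℝ → ℝ} (hK : ContDiff ℝ 1 K) :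
    IsPrimitiveOf K (deriv K) where
  intervalIntegrable := (hK.continuous_deriv le_rfl).intervalIntegrable
  integral_eq_sub _ _ := intervalIntegral.integral_deriv_eq_sub
    (fun x _ => (hK.differentiable one_ne_zero x).hasDerivAt.differentiableAt)
    ((hK.continuous_deriv le_rfl).intervalIntegrable _ _)

theorem isPrimitiveOf_of_locallyFinite {U u : ℝ → ℝ} {J : Set ℝ}
    (hJ : ∀ a b, (J ∩ Icc a b).Finite) (hu : ∀ a b, IntervalIntegrable u volume a b)
    (hU : ∀ x y, x ≤ y → Ioo x y ∩ J = ∅ → U y = U x + ∫ σ in x..y, u σ) :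
    IsPrimitiveOf U u := by
  -- Induct on the jump points in the interval, splitting it at the largest one.
  have key (F : Finset ℝ) :
      ∀ x y, x ≤ y → Ioo x y ∩ J ⊆ F → ∫ σ in x..y, u σ = U y - U x := by
    induction F using Finset.induction_on_max with
    | empty =>
      intro x y hxy hF
      rw [hU x y hxy (by simpa using hF)]
      ring
    | insert j F hjF ih =>
      intro x y hxy hF
      by_cases hj : j ∈ Ioo x y
      · have hxj : Ioo x j ∩ J ⊆ F := fun z hz => by
          have := hF ⟨⟨hz.1.1, hz.1.2.trans hj.2⟩, hz.2⟩
          simp only [Finset.coe_insert, mem_insert_iff, Finset.mem_coe] at this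
          exact this.resolve_left hz.1.2.ne
        have hjy : Ioo j y ∩ J = ∅ := by
          refine eq_empty_of_forall_notMem fun z hz => ?_
          have := hF ⟨⟨hj.1.trans hz.1.1, hz.1.2⟩, hz.2⟩
          simp only [Finset.coe_insert, mem_insert_iff, Finset.mem_coe] at this
          rcases this with rfl | hzF
          · exact lt_irrefl _ hz.1.1
          · exact lt_asymm hz.1.1 (hjF z hzF)
        rw [← intervalIntegral.integral_add_adjacent_intervals (hu x j) (hu j y),
          ih x j hj.1.le hxj, hU j y hj.2.le hjy]
        ring
      · refine ih x y hxy fun z hz => ?_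
        have := hF hz
        simp only [Finset.coe_insert, mem_insert_iff, Finset.mem_coe] at this
        exact this.resolve_left fun hzj => hj (hzj ▸ hz.1)
  have hsub (x y : ℝ) : Ioo x y ∩ J ⊆ (hJ x y).toFinset := by
    rw [Finite.coe_toFinset, inter_comm]
    exact inter_subset_inter_right J Ioo_subset_Icc_self
  refine ⟨hu, fun a b => ?_⟩
  rcases le_total a b with hab | hba
  · exact key _ a b hab (hsub a b)
  · rw [intervalIntegral.integral_symm, key _ b a hba (hsub b a)]
    ring

theorem abs_intervalIntegral_mul_le {ψ G : ℝ → ℝ} {a b M : ℝ} (hab : a ≤ b)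
    (hψ : IntervalIntegrable ψ volume a b) (hG : ∀ x, |G x| ≤ M) :
    |∫ x in a..b, ψ x * G x| ≤ (∫ x in a..b, |ψ x|) * M := by
  rw [← intervalIntegral.integral_mul_const M fun x => |ψ x|]
  refine (Real.norm_eq_abs _).symm.trans_le
    (intervalIntegral.norm_integral_le_of_norm_le hab (ae_of_all _ fun x _ => ?_)
      (hψ.abs.mul_const M))
  rw [Real.norm_eq_abs, abs_mul]
  exact mul_le_mul_of_nonneg_left (hG x) (abs_nonneg _)

theorem integral_mul_eq_integral_mul_of_isPrimitiveOf {g G₁ G₂ f φ ψ : ℝ → ℝ} {a b : ℝ}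
    (hG₁ : IsPrimitiveOf G₁ g) (hG₂ : IsPrimitiveOf G₂ G₁)
    (hf : IsPrimitiveOf f φ) (hφ : IsPrimitiveOf φ ψ)
    (hfa : f a = 0) (hfb : f b = 0) (hφa : φ a = 0) (hφb : φ b = 0) :
    ∫ x in a..b, f x * g x = ∫ x in a..b, ψ x * G₂ x := by
  rw [hf.integral_mul_eq hG₁, hφ.integral_mul_eq hG₂, hfa, hfb, hφa, hφb]
  ring

theorem abs_integral_comp_mul_mul_le {g G₁ G₂ f φ ψ : ℝ → ℝ} {a b M N : ℝ} (hab : a ≤ b)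
    (hN : N ≠ 0) (hG₁ : IsPrimitiveOf G₁ g) (hG₂ : IsPrimitiveOf G₂ G₁) (hM : ∀ x, |G₂ x| ≤ M)
    (hf : IsPrimitiveOf f φ) (hφ : IsPrimitiveOf φ ψ)
    (hfa : f a = 0) (hfb : f b = 0) (hφa : φ a = 0) (hφb : φ b = 0) :
    |∫ x in a..b, g (N * x) * f x| ≤ (∫ x in a..b, |ψ x|) * M / N ^ 2 := by
  have hG₂N : ∀ x, |G₂ (N * x) / N / N| ≤ M / N ^ 2 := fun x => by
    rw [div_div, ← sq, abs_div, abs_of_nonneg (sq_nonneg N)]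
    exact div_le_div_of_nonneg_right (hM _) (sq_nonneg N)
  simp_rw [mul_comm (g _)]
  rw [integral_mul_eq_integral_mul_of_isPrimitiveOf (hG₁.comp_mul_left hN)
    ((hG₂.comp_mul_left hN).div_const N) hf hφ hfa hfb hφa hφb, mul_div_assoc]
  exact abs_intervalIntegral_mul_le hab (hφ.intervalIntegrable a b) hG₂N

theorem error_estimate_piecewise_AC1_general
    (β B1 B2 : ℝ → ℝ)
    (hβm : Measurable β) (hβb : ∃ M : ℝ, ∀ t : ℝ, |β t| ≤ M)
    (hB1 : ∀ t : ℝ, B1 t = B1 0 + ∫ σ in (0:ℝ)..t, β σ)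
    (hB2 : ∀ t : ℝ, B2 t = B2 0 + ∫ σ in (0:ℝ)..t, B1 σ)
    (hB2b : ∃ M : ℝ, ∀ t : ℝ, |B2 t| ≤ M)
    (k : ℝ) (hk : 0 < k)
    (K : ℝ → ℝ) (hK : ContDiff ℝ 2 K)
    (hKsupp : Function.support K ⊆ Set.Icc 0 k)
    (hK0 : K 0 = 0) (hKk : K k = 0)
    (hK'0 : deriv K 0 = 0) (hK'k : deriv K k = 0)
    (s : ℝ → ℝ) (hs : Continuous s)
    (J : Set ℝ) (hJ : ∀ a b : ℝ, (J ∩ Set.Icc a b).Finite)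
    (s' s'' : ℝ → ℝ)
    (hderiv : ∀ x : ℝ, x ∉ J → HasDerivAt s (s' x) x)
    (hs'' : MeasureTheory.LocallyIntegrable s'')
    (hAC : ∀ x y : ℝ, x ≤ y → Set.Ioo x y ∩ J = ∅ →
      s' y = s' x + ∫ σ in x..y, s'' σ)
    (t : ℝ) :
    ∃ C : ℝ, ∀ N : ℝ, 1 ≤ N →
      |∫ σ : ℝ, β (N * σ) * s σ * K (t - σ)| ≤ C / N ^ 2 := by
  obtain ⟨Mβ, hMβ⟩ := hβb
  obtain ⟨M, hM⟩ := hB2b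
  have hβ : IsPrimitiveOf B1 β := .of_eq_add_integral (fun a b =>
    intervalIntegrable_const.mono_fun' hβm.aestronglyMeasurable (ae_of_all _ hMβ)) 0 hB1
  have hB : IsPrimitiveOf B2 B1 := .of_eq_add_integral hβ.continuous.intervalIntegrable 0 hB2
  have hs₂ : IsPrimitiveOf s' s'' := isPrimitiveOf_of_locallyFinite hJ
    (fun a b => (hs''.integrableOn_isCompact isCompact_uIcc).intervalIntegrable) hAC
  have hs₁ : IsPrimitiveOf s s' := isPrimitiveOf_of_locallyFinite hJ
    hs₂.continuous.intervalIntegrable fun x y hxy hxyJ => by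
      rw [intervalIntegral.integral_eq_sub_of_hasDerivAt_of_le hxy hs.continuousOn
        (fun z hz => hderiv z fun hzJ => (eq_empty_iff_forall_notMem.mp hxyJ) z ⟨hz, hzJ⟩)
        (hs₂.continuous.intervalIntegrable x y)]
      ring
  have hK₀ : IsPrimitiveOf (fun σ => K (t - σ)) (fun σ => -deriv K (t - σ)) :=
    (hK.of_le one_le_two).isPrimitiveOf_deriv.comp_sub_left t
  have hK₁ : IsPrimitiveOf (fun σ => -deriv K (t - σ)) (fun σ => - -deriv (deriv K) (t - σ)) :=
    ((contDiff_succ_iff_deriv.mp hK).2.2.isPrimitiveOf_deriv.comp_sub_left t).neg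
  obtain ⟨ψ, hφ⟩ : ∃ ψ, IsPrimitiveOf (fun σ => s' σ * K (t - σ) + s σ * -deriv K (t - σ)) ψ :=
    ⟨_, (hs₂.mul hK₀).add (hs₁.mul hK₁)⟩
  refine ⟨(∫ σ in t - k..t, |ψ σ|) * M, fun N hN => ?_⟩
  have hsupp : Function.support (fun σ => β (N * σ) * s σ * K (t - σ)) ⊆ Ioc (t - k) t := by
    intro σ hσ
    have hKσ : K (t - σ) ≠ 0 := right_ne_zero_of_mul hσ
    obtain ⟨h0, hk'⟩ := hKsupp hKσ
    refine ⟨lt_of_le_of_ne (by linarith) fun h => hKσ ?_, by linarith⟩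
    rwa [← h, sub_sub_cancel]
  rw [← intervalIntegral.integral_eq_integral_of_support_subset hsupp]
  simp only [mul_assoc]
  exact abs_integral_comp_mul_mul_le (by linarith) (by positivity) hβ hB hM (hs₁.mul hK₀)
    hφ (by simp [hKk]) (by simp [hK0]) (by simp [hKk, hK'k])
    (by simp [hK0, hK'0])

/-- Error estimate for a second-order CT-ΣΔ modulator with a piecewise AC¹
input envelope `s` (jump set `J`, locally finite): `I_N(t) = O(1/N²)`. -/
theorem error_estimate_piecewise_AC1
    (β B1 B2 : ℝ → ℝ)
    (hβm : Measurable β) (hβb : ∃ M : ℝ, ∀ t : ℝ, |β t| ≤ M)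
    (hB1 : ∀ t : ℝ, B1 t = B1 0 + ∫ σ in (0:ℝ)..t, β σ)
    (hB1b : ∃ M : ℝ, ∀ t : ℝ, |B1 t| ≤ M)
    (hB1mean : Tendsto (fun T : ℝ => (1 / T) * ∫ t in (0:ℝ)..T, B1 t) atTop (nhds 0))
    (hB2 : ∀ t : ℝ, B2 t = B2 0 + ∫ σ in (0:ℝ)..t, B1 σ)
    (hB2b : ∃ M : ℝ, ∀ t : ℝ, |B2 t| ≤ M)
    (hB2mean : Tendsto (fun T : ℝ => (1 / T) * ∫ t in (0:ℝ)..T, B2 t) atTop (nhds 0))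
    (k : ℝ) (hk : 0 < k)
    (K : ℝ → ℝ) (hK : ContDiff ℝ 2 K)
    (hKsupp : Function.support K ⊆ Set.Icc 0 k)
    (hK0 : K 0 = 0) (hKk : K k = 0)
    (hK'0 : deriv K 0 = 0) (hK'k : deriv K k = 0)
    (s : ℝ → ℝ) (hs : Continuous s)
    (J : Set ℝ) (hJ : ∀ a b : ℝ, (J ∩ Set.Icc a b).Finite)
    (s' s'' : ℝ → ℝ)
    (hderiv : ∀ x : ℝ, x ∉ J → HasDerivAt s (s' x) x)
    (hs'' : MeasureTheory.LocallyIntegrable s'')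
    (hAC : ∀ x y : ℝ, x ≤ y → Set.Ioo x y ∩ J = ∅ →
      s' y = s' x + ∫ σ in x..y, s'' σ)
    (t : ℝ) (ht : 0 ≤ t) :
    ∃ C : ℝ, ∀ N : ℝ, 1 ≤ N →
      |∫ σ : ℝ, β (N * σ) * s σ * K (t - σ)| ≤ C / N ^ 2 :=
  error_estimate_piecewise_AC1_general β B1 B2 hβm hβb hB1 hB2 hB2b k hk K hK hKsupp hK0 hKk hK'0
    hK'k s hs J hJ s' s'' hderiv hs'' hAC t
end

section
/- Let g : [0,∞) → ℝ be bounded measurable with zero Cesàro mean, and let {f_t''} be a fixed integrable function supported in [t−k, t]. Then (1/N²) ∫_{t−k}^{t} g(Nσ) f_t''(σ) dσ = o(1/N²) as N → ∞, i.e. N² times this quantity tends to 0. -/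
/-!
With `G(T) = ∫₀ᵀ g`, a change of variables gives `∫_c^d g(Nσ) dσ = N⁻¹ (G(Nd) - G(Nc))`, which
tends to `0` by the zero Cesàro mean whenever `0 ≤ c, d`. So the family `σ ↦ g(Nσ)`, uniformly
bounded on `[t - k, t] ⊆ [0, ∞)`, integrates to `0` in the limit against indicators of
subintervals; hence against continuous weights (Riemann sums, by uniform continuity) and then
against every integrable weight (density of continuous functions in `L¹`, with the uniform bound
controlling the error). The factors `N²` and `1 / N²` cancel.
-/

open MeasureTheory Filter Set Topology

lemma tendsto_zero_of_forall_approx {ι : Type*} {l : Filter ι} {v : ι → ℝ} {C : ℝ}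
    (h : ∀ ε > 0, ∃ u : ι → ℝ, Tendsto u l (𝓝 0) ∧ ∀ᶠ i in l, |v i - u i| ≤ C * ε) :
    Tendsto v l (𝓝 0) := by
  rw [Metric.tendsto_nhds]
  intro e he
  have hCε : C * (e / (2 * (|C| + 1))) < e / 2 := calc
    C * (e / (2 * (|C| + 1))) ≤ |C| * (e / (2 * (|C| + 1))) := by gcongr; exact le_abs_self C
    _ = e / 2 * (|C| / (|C| + 1)) := by field_simp
    _ < e / 2 :=
      mul_lt_of_lt_one_right (by positivity) ((div_lt_one (by positivity)).2 (by linarith))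
  obtain ⟨u, hu, hvu⟩ := h (e / (2 * (|C| + 1))) (by positivity)
  filter_upwards [hvu, Metric.tendsto_nhds.1 hu (e / 2) (by positivity)] with i hvu hu
  rw [Real.dist_eq, sub_zero] at hu ⊢
  linarith [abs_sub_abs_le_abs_sub (v i) (u i)]

lemma tendsto_inv_mul_intervalIntegral_comp_mul_atTop {g : ℝ → ℝ}
    (hg : Tendsto (fun T : ℝ => (1 / T) * ∫ x in (0:ℝ)..T, g x) atTop (𝓝 0))
    {u : ℝ} (hu : 0 ≤ u) :
    Tendsto (fun N : ℝ => N⁻¹ * ∫ x in (0:ℝ)..N * u, g x) atTop (𝓝 0) := by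
  rcases hu.eq_or_lt with rfl | hu
  · simp
  have h := (hg.comp (tendsto_id.atTop_mul_const hu)).const_mul u
  rw [mul_zero] at h
  refine h.congr' ?_
  filter_upwards [eventually_gt_atTop 0] with N hN
  simp only [Function.comp_apply, id]
  field_simp

lemma tendsto_intervalIntegral_comp_mul_atTop {g : ℝ → ℝ}
    (hg_int : ∀ T, IntegrableOn g (Icc 0 T))
    (hg : Tendsto (fun T : ℝ => (1 / T) * ∫ x in (0:ℝ)..T, g x) atTop (𝓝 0))
    {c d : ℝ} (hc : 0 ≤ c) (hd : 0 ≤ d) :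
    Tendsto (fun N : ℝ => ∫ σ in c..d, g (N * σ)) atTop (𝓝 0) := by
  have h := (tendsto_inv_mul_intervalIntegral_comp_mul_atTop hg hd).sub
    (tendsto_inv_mul_intervalIntegral_comp_mul_atTop hg hc)
  rw [sub_zero] at h
  refine h.congr' ?_
  filter_upwards [eventually_gt_atTop 0] with N hN
  have hint : ∀ u, 0 ≤ u → IntervalIntegrable g volume 0 (N * u) := fun u hu =>
    IntegrableOn.intervalIntegrable (by rw [uIcc_of_le (by positivity)]; exact hg_int _)
  rw [intervalIntegral.integral_comp_mul_left g hN.ne', smul_eq_mul, ← mul_sub,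
    intervalIntegral.integral_interval_sub_left (hint d hd) (hint c hc)]

lemma abs_intervalIntegral_mul_sub_le {h φ : ℝ → ℝ} {c d M ε : ℝ} (hcd : c ≤ d)
    (hh : IntervalIntegrable h volume c d)
    (hhφ : IntervalIntegrable (fun σ => h σ * φ σ) volume c d)
    (hM : ∀ σ ∈ Ioc c d, |h σ| ≤ M) (hφ : ∀ σ ∈ Ioc c d, |φ σ - φ c| ≤ ε) :
    |(∫ σ in c..d, h σ * φ σ) - φ c * ∫ σ in c..d, h σ| ≤ M * ε * (d - c) := by
  rw [← intervalIntegral.integral_const_mul, ← intervalIntegral.integral_sub hhφ (hh.const_mul _),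
    ← Real.norm_eq_abs, ← abs_of_nonneg (sub_nonneg.2 hcd)]
  refine intervalIntegral.norm_integral_le_of_norm_le_const fun σ hσ => ?_
  rw [uIoc_of_le hcd] at hσ
  rw [Real.norm_eq_abs, show h σ * φ σ - φ c * h σ = h σ * (φ σ - φ c) by ring, abs_mul]
  exact mul_le_mul (hM σ hσ) (hφ σ hσ) (abs_nonneg _) ((abs_nonneg _).trans (hM σ hσ))

lemma abs_intervalIntegral_mul_sub_sum_le {h φ : ℝ → ℝ} {x : ℕ → ℝ} {n : ℕ} {M ε : ℝ}
    (hx : Monotone x) (hh : IntegrableOn h (Icc (x 0) (x n)))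
    (hhφ : IntegrableOn (fun σ => h σ * φ σ) (Icc (x 0) (x n)))
    (hM : ∀ σ ∈ Icc (x 0) (x n), |h σ| ≤ M)
    (hφ : ∀ j < n, ∀ σ ∈ Ioc (x j) (x (j + 1)), |φ σ - φ (x j)| ≤ ε) :
    |(∫ σ in x 0..x n, h σ * φ σ) - ∑ j ∈ Finset.range n, φ (x j) * ∫ σ in x j..x (j + 1), h σ|
      ≤ M * ε * (x n - x 0) := by
  have hsub : ∀ j < n, uIcc (x j) (x (j + 1)) ⊆ Icc (x 0) (x n) := fun j hj => by
    rw [uIcc_of_le (hx j.le_succ)]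
    exact Icc_subset_Icc (hx j.zero_le) (hx hj)
  rw [← intervalIntegral.sum_integral_adjacent_intervals fun j hj =>
      (hhφ.mono_set (hsub j hj)).intervalIntegrable, ← Finset.sum_sub_distrib,
    ← Finset.sum_range_sub, Finset.mul_sum]
  refine (Finset.abs_sum_le_sum_abs _ _).trans (Finset.sum_le_sum fun j hj => ?_)
  have hj := Finset.mem_range.1 hj
  refine abs_intervalIntegral_mul_sub_le (hx j.le_succ) (hh.mono_set (hsub j hj)).intervalIntegrable
    (hhφ.mono_set (hsub j hj)).intervalIntegrable (fun σ hσ => hM σ ?_) (hφ j hj)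
  exact hsub j hj (uIcc_of_le (hx j.le_succ) ▸ Ioc_subset_Icc_self hσ)

lemma exists_monotone_partition_sub_lt {a b δ : ℝ} (hab : a ≤ b) (hδ : 0 < δ) :
    ∃ (n : ℕ) (x : ℕ → ℝ), Monotone x ∧ x 0 = a ∧ x n = b ∧ ∀ j, x (j + 1) - x j < δ := by
  obtain ⟨n, hn⟩ := exists_nat_gt ((b - a) / δ)
  have hn0 : (0 : ℝ) < n := (div_nonneg (sub_nonneg.2 hab) hδ.le).trans_lt hn
  refine ⟨n, fun j => a + j * ((b - a) / n), fun i j hij => ?_, by simp, by field_simp; ring,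
    fun j => ?_⟩
  · have : 0 ≤ (b - a) / n := div_nonneg (sub_nonneg.2 hab) hn0.le
    dsimp only
    gcongr
  · calc _ = (b - a) / n := by push_cast; ring
      _ < δ := by rwa [div_lt_iff₀ hn0, mul_comm, ← div_lt_iff₀ hδ]

section WeakLimit

variable {ι : Type*} {l : Filter ι} {h : ι → ℝ → ℝ} {a b M : ℝ}

lemma tendsto_intervalIntegral_mul_of_continuousOn (hab : a ≤ b)
    (hint : ∀ᶠ i in l, IntegrableOn (h i) (Icc a b))
    (hbdd : ∀ᶠ i in l, ∀ σ ∈ Icc a b, |h i σ| ≤ M)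
    (hinterval : ∀ c ∈ Icc a b, ∀ d ∈ Icc a b, Tendsto (fun i => ∫ σ in c..d, h i σ) l (𝓝 0))
    {φ : ℝ → ℝ} (hφ : ContinuousOn φ (Icc a b)) :
    Tendsto (fun i => ∫ σ in a..b, h i σ * φ σ) l (𝓝 0) := by
  refine tendsto_zero_of_forall_approx (C := M * (b - a)) fun ε hε => ?_
  obtain ⟨δ, hδ, hφδ⟩ := Metric.uniformContinuousOn_iff.1
    (isCompact_Icc.uniformContinuousOn_of_continuous hφ) ε hε
  obtain ⟨n, x, hx, hx0, hxn, hstep⟩ := exists_monotone_partition_sub_lt hab hδ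
  have hmem : ∀ j ≤ n, x j ∈ Icc a b := fun j hj => ⟨hx0 ▸ hx j.zero_le, hxn ▸ hx hj⟩
  have hφ_step : ∀ j < n, ∀ σ ∈ Ioc (x j) (x (j + 1)), |φ σ - φ (x j)| ≤ ε := by
    intro j hj σ hσ
    have hσ_mem : σ ∈ Icc a b :=
      ⟨(hmem j hj.le).1.trans hσ.1.le, hσ.2.trans (hmem (j + 1) hj).2⟩
    have hdist : dist σ (x j) < δ := by
      rw [Real.dist_eq, abs_of_pos (sub_pos.2 hσ.1)]
      linarith [hstep j, hσ.2]
    exact (Real.dist_eq _ _ ▸ hφδ σ hσ_mem (x j) (hmem j hj.le) hdist).le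
  refine ⟨fun i => ∑ j ∈ Finset.range n, φ (x j) * ∫ σ in x j..x (j + 1), h i σ,
    by simpa using tendsto_finsetSum _ fun j hj => (hinterval _ (hmem j (Finset.mem_range.1 hj).le)
      _ (hmem (j + 1) (Finset.mem_range.1 hj))).const_mul (φ (x j)), ?_⟩
  filter_upwards [hint, hbdd] with i hi hMi
  rw [← hx0, ← hxn] at hi hMi hφ ⊢
  calc _ ≤ M * ε * (x n - x 0) :=
        abs_intervalIntegral_mul_sub_sum_le hx hi (hi.mul_continuousOn hφ isCompact_Icc) hMi hφ_step
    _ = M * (x n - x 0) * ε := by ring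

lemma tendsto_intervalIntegral_mul_of_integrableOn (hab : a ≤ b)
    (hint : ∀ᶠ i in l, IntegrableOn (h i) (Icc a b))
    (hbdd : ∀ᶠ i in l, ∀ σ ∈ Icc a b, |h i σ| ≤ M)
    (hinterval : ∀ c ∈ Icc a b, ∀ d ∈ Icc a b, Tendsto (fun i => ∫ σ in c..d, h i σ) l (𝓝 0))
    {f : ℝ → ℝ} (hf : IntegrableOn f (Icc a b)) :
    Tendsto (fun i => ∫ σ in a..b, h i σ * f σ) l (𝓝 0) := by
  have : (volume.restrict (Icc a b)).Regular :=
    Measure.Regular.restrict_of_measure_ne_top measure_Icc_lt_top.ne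
  refine tendsto_zero_of_forall_approx (C := M) fun ε hε => ?_
  obtain ⟨φ, -, hfφ, hφ, hφ_int⟩ := hf.exists_hasCompactSupport_integral_sub_le hε
  refine ⟨_, tendsto_intervalIntegral_mul_of_continuousOn hab hint hbdd hinterval
    hφ.continuousOn, ?_⟩
  filter_upwards [hint, hbdd] with i hi hMi
  have hMi' : ∀ᵐ σ ∂volume.restrict (Icc a b), ‖h i σ‖ ≤ M :=
    ae_restrict_of_forall_mem measurableSet_Icc hMi
  have hhf : Integrable (fun σ => h i σ * f σ) (volume.restrict (Icc a b)) :=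
    hf.bdd_mul hi.aestronglyMeasurable hMi'
  have hhφ : Integrable (fun σ => h i σ * φ σ) (volume.restrict (Icc a b)) :=
    hφ_int.bdd_mul hi.aestronglyMeasurable hMi'
  simp only [intervalIntegral.integral_of_le hab, ← integral_Icc_eq_integral_Ioc]
  rw [← integral_sub hhf hhφ, ← Real.norm_eq_abs]
  calc ‖∫ σ in Icc a b, h i σ * f σ - h i σ * φ σ‖
      ≤ ∫ σ in Icc a b, M * ‖f σ - φ σ‖ := by
        refine norm_integral_le_of_norm_le ((hf.sub hφ_int).norm.const_mul M) ?_
        filter_upwards [hMi'] with σ hσ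
        rw [← mul_sub, norm_mul]
        exact mul_le_mul_of_nonneg_right hσ (norm_nonneg _)
    _ = M * ∫ σ in Icc a b, ‖f σ - φ σ‖ := integral_const_mul _ _
    _ ≤ M * ε := mul_le_mul_of_nonneg_left hfφ ((abs_nonneg _).trans (hMi a ⟨le_rfl, hab⟩))

end WeakLimit

theorem rl_second_derivative_term_general
    (g : ℝ → ℝ)
    (hgm : Measurable g) (hgb : ∃ M : ℝ, ∀ x : ℝ, 0 ≤ x → |g x| ≤ M)
    (hgmean : Tendsto (fun T : ℝ => (1 / T) * ∫ x in (0:ℝ)..T, g x) atTop (nhds 0))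
    (t k : ℝ) (hk : 0 < k) (htk : k ≤ t)
    (f'' : ℝ → ℝ) (hf'' : IntegrableOn f'' (Set.Icc (t - k) t)) :
    Tendsto
      (fun N : ℝ => N ^ 2 * ((1 / N ^ 2) * ∫ σ in (t - k)..t, g (N * σ) * f'' σ))
      atTop (nhds 0) := by
  obtain ⟨M, hM⟩ := hgb
  have hbdd : ∀ᶠ N in atTop, ∀ σ ∈ Icc (t - k) t, |g (N * σ)| ≤ M := by
    filter_upwards [eventually_ge_atTop 0] with N hN σ hσ
    exact hM _ (mul_nonneg hN (by linarith [hσ.1]))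
  have hint : ∀ᶠ N in atTop, IntegrableOn (fun σ => g (N * σ)) (Icc (t - k) t) := by
    filter_upwards [hbdd] with N hN
    exact Measure.integrableOn_of_bounded measure_Icc_lt_top.ne
      (hgm.comp (measurable_const_mul N)).aestronglyMeasurable
      (ae_restrict_of_forall_mem measurableSet_Icc hN)
  have hg_int : ∀ T, IntegrableOn g (Icc 0 T) := fun T =>
    Measure.integrableOn_of_bounded measure_Icc_lt_top.ne hgm.aestronglyMeasurable
      (ae_restrict_of_forall_mem measurableSet_Icc fun x hx => hM x hx.1)
  have hinterval : ∀ c ∈ Icc (t - k) t, ∀ d ∈ Icc (t - k) t,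
      Tendsto (fun N : ℝ => ∫ σ in c..d, g (N * σ)) atTop (𝓝 0) := fun c hc d hd =>
    tendsto_intervalIntegral_comp_mul_atTop hg_int hgmean (by linarith [hc.1]) (by linarith [hd.1])
  refine (tendsto_intervalIntegral_mul_of_integrableOn (by linarith) hint hbdd hinterval
    hf'').congr' ?_
  filter_upwards [eventually_ne_atTop 0] with N hN
  field_simp

/-- Riemann–Lebesgue applied to the second-derivative term: for zero-Cesàro-mean
bounded `g` and integrable `f''` supported in `[t−k, t]`,
`(1/N²) ∫ g(Nσ) f''(σ) dσ = o(1/N²)`. -/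
theorem rl_second_derivative_term
    (g : ℝ → ℝ)
    (hgm : Measurable g) (hgb : ∃ M : ℝ, ∀ x : ℝ, 0 ≤ x → |g x| ≤ M)
    (hgmean : Tendsto (fun T : ℝ => (1 / T) * ∫ x in (0:ℝ)..T, g x) atTop (nhds 0))
    (t k : ℝ) (hk : 0 < k) (htk : k ≤ t)
    (f'' : ℝ → ℝ) (hf'' : IntegrableOn f'' (Set.Icc (t - k) t))
    (hsupp : Function.support f'' ⊆ Set.Icc (t - k) t) :
    Tendsto
      (fun N : ℝ => N ^ 2 * ((1 / N ^ 2) * ∫ σ in (t - k)..t, g (N * σ) * f'' σ))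
      atTop (nhds 0) :=
  rl_second_derivative_term_general g hgm hgb hgmean t k hk htk f'' hf''
end

section
/- Let β ∈ L^∞[0,∞) have a bounded zero-mean primitive β⁽⁻¹⁾, let K be C¹ with support in [0,k] and K(0)=K(k)=0, and let s : ℝ → ℝ be bounded with bounded a.e. derivative (e.g. Lipschitz). Then I_N(t) := ∫_ℝ β(Nσ) s(σ) K(t−σ) dσ = O(1/N): there is C with |I_N(t)| ≤ C/N for all N ≥ 1 and all t ≥ 0. -/
/-!
With `φ(σ) = s(σ) K(t - σ)`, which is Lipschitz uniformly in `t` and vanishes at both ends of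
its support `[t - k, t]`, one integration by parts against the primitive of `σ ↦ β(Nσ)` gives
`∫ β(Nσ) φ(σ) dσ = -∫ φ'(σ) (B1(Nσ) - B1(N(t - k))) / N dσ`, and `|B1| ≤ M` bounds this by
`2 M Lip(φ) k / N`.
-/

open MeasureTheory Filter Set NNReal

theorem LipschitzWith.mul_of_norm_le {α R : Type*} [PseudoMetricSpace α]
    [NonUnitalSeminormedRing R] {f g : α → R} {Kf Kg Mf Mg : ℝ≥0}
    (hf : LipschitzWith Kf f) (hg : LipschitzWith Kg g)
    (hfM : ∀ x, ‖f x‖ ≤ Mf) (hgM : ∀ x, ‖g x‖ ≤ Mg) :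
    LipschitzWith (Mf * Kg + Mg * Kf) fun x => f x * g x := by
  refine LipschitzWith.of_dist_le_mul fun x y => ?_
  rw [dist_eq_norm, show f x * g x - f y * g y = f x * (g x - g y) + (f x - f y) * g y by
    noncomm_ring]
  calc ‖f x * (g x - g y) + (f x - f y) * g y‖
      ≤ ‖f x‖ * ‖g x - g y‖ + ‖f x - f y‖ * ‖g y‖ :=
        (norm_add_le _ _).trans (add_le_add (norm_mul_le _ _) (norm_mul_le _ _))
    _ ≤ Mf * (Kg * dist x y) + Kf * dist x y * Mg := by
        rw [← dist_eq_norm, ← dist_eq_norm]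
        gcongr
        exacts [hfM x, hg.dist_le_mul x y, hf.dist_le_mul x y, hgM y]
    _ = ↑(Mf * Kg + Mg * Kf) * dist x y := by push_cast; ring

/-- No measurability of `f'` is needed: where it is not integrable its integral is `0`. -/
theorem lipschitzWith_of_eq_add_integral {E : Type*} [NormedAddCommGroup E] [NormedSpace ℝ E]
    {f f' : ℝ → E} {M : ℝ≥0} (hf' : ∀ x, ‖f' x‖ ≤ M)
    (hf : ∀ x y, f y = f x + ∫ σ in x..y, f' σ) : LipschitzWith M f :=
  LipschitzWith.of_dist_le_mul fun x y => by
    rw [dist_eq_norm, hf y x, add_sub_cancel_left, Real.dist_eq]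
    exact intervalIntegral.norm_integral_le_of_norm_le_const fun σ _ => hf' σ

/-- The primitive of `f` is only differentiable almost everywhere (Lebesgue differentiation),
which suffices for integration by parts of absolutely continuous functions. -/
theorem integral_mul_eq_neg_integral_deriv_mul_primitive {f φ : ℝ → ℝ} {a b : ℝ}
    (hf : IntervalIntegrable f volume a b) (hφ : AbsolutelyContinuousOnInterval φ a b)
    (ha : φ a = 0) (hb : φ b = 0) :
    ∫ x in a..b, φ x * f x = -∫ x in a..b, deriv φ x * ∫ u in a..x, f u := by
  have hF := hf.absolutelyContinuousOnInterval_intervalIntegral (c := a) left_mem_uIcc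
  calc ∫ x in a..b, φ x * f x = ∫ x in a..b, φ x * deriv (fun x => ∫ u in a..x, f u) x := by
        refine intervalIntegral.integral_congr_ae ?_
        filter_upwards [hf.ae_hasDerivAt_integral] with x hx hxab
        rw [(hx (uIoc_subset_uIcc hxab) a left_mem_uIcc).deriv]
    _ = _ := by rw [hφ.integral_mul_deriv_eq_deriv_mul hF, ha, hb]; ring

theorem mul_integral_comp_mul_left_eq_sub {β B : ℝ → ℝ} (hβ : ∀ x y, IntervalIntegrable β volume x y)
    (hB : ∀ x, B x = B 0 + ∫ σ in (0:ℝ)..x, β σ) (N x y : ℝ) :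
    N * ∫ u in x..y, β (N * u) = B (N * y) - B (N * x) := by
  rw [← smul_eq_mul, intervalIntegral.smul_integral_comp_mul_left, hB (N * y), hB (N * x),
    ← intervalIntegral.integral_interval_sub_left (hβ 0 _) (hβ 0 _)]
  ring

theorem abs_integral_comp_mul_left_le {β B : ℝ → ℝ} {MB N : ℝ}
    (hβ : ∀ x y, IntervalIntegrable β volume x y)
    (hB : ∀ x, B x = B 0 + ∫ σ in (0:ℝ)..x, β σ) (hMB : ∀ x, |B x| ≤ MB) (hN : 0 < N) (x y : ℝ) :
    |∫ u in x..y, β (N * u)| ≤ 2 * MB / N := by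
  rw [le_div_iff₀ hN, ← abs_of_pos hN, ← abs_mul, abs_of_pos hN, mul_comm,
    mul_integral_comp_mul_left_eq_sub hβ hB]
  linarith [abs_sub _ _ |>.trans (add_le_add (hMB (N * y)) (hMB (N * x)))]

theorem integral_mul_comp_sub_eq_intervalIntegral {f K : ℝ → ℝ} {k : ℝ} (hk : 0 ≤ k)
    (hK : Function.support K ⊆ Icc 0 k) (t : ℝ) :
    ∫ σ, f σ * K (t - σ) = ∫ σ in t - k..t, f σ * K (t - σ) := by
  rw [intervalIntegral.integral_of_le (by linarith), ← integral_Icc_eq_integral_Ioc,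
    setIntegral_eq_integral_of_forall_compl_eq_zero]
  intro σ hσ
  suffices K (t - σ) = 0 by rw [this, mul_zero]
  by_contra h
  obtain ⟨h0, hkσ⟩ := hK h
  exact hσ ⟨by linarith, by linarith⟩

theorem first_order_error_estimate_general
    (β B1 : ℝ → ℝ)
    (hβm : Measurable β) (hβb : ∃ M : ℝ, ∀ x : ℝ, |β x| ≤ M)
    (hB1 : ∀ x : ℝ, B1 x = B1 0 + ∫ σ in (0:ℝ)..x, β σ)
    (hB1b : ∃ M : ℝ, ∀ x : ℝ, |B1 x| ≤ M)
    (k : ℝ) (hk : 0 < k)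
    (K : ℝ → ℝ) (hK : ContDiff ℝ 1 K)
    (hKsupp : Function.support K ⊆ Set.Icc 0 k)
    (hK0 : K 0 = 0) (hKk : K k = 0)
    (s s' : ℝ → ℝ)
    (hsb : ∃ M : ℝ, ∀ x : ℝ, |s x| ≤ M ∧ |s' x| ≤ M)
    (hsAC : ∀ x y : ℝ, s y = s x + ∫ σ in x..y, s' σ) :
    ∃ C : ℝ, ∀ N : ℝ, 1 ≤ N → ∀ t : ℝ, 0 ≤ t →
      |∫ σ : ℝ, β (N * σ) * s σ * K (t - σ)| ≤ C / N := by
  obtain ⟨Mβ, hMβ⟩ := hβb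
  obtain ⟨MB, hMB⟩ := hB1b
  obtain ⟨Ms, hMs⟩ := hsb
  lift Ms to ℝ≥0 using (abs_nonneg _).trans (hMs 0).1
  have hKc : HasCompactSupport K := .of_support_subset_isCompact isCompact_Icc hKsupp
  obtain ⟨LK, hLK⟩ := hK.lipschitzWith_of_hasCompactSupport hKc one_ne_zero
  obtain ⟨MK, hMK⟩ := hKc.exists_bound_of_continuous hK.continuous
  lift MK to ℝ≥0 using (norm_nonneg _).trans (hMK 0)
  have hs : LipschitzWith Ms s := lipschitzWith_of_eq_add_integral (fun x => (hMs x).2) hsAC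
  have hβ (x y : ℝ) : IntervalIntegrable β volume x y :=
    intervalIntegrable_const.mono_fun' hβm.aestronglyMeasurable (ae_of_all _ hMβ)
  set L := Ms * LK + MK * Ms
  refine ⟨L * (2 * MB) * k, fun N hN t _ => ?_⟩
  have hN0 : 0 < N := by linarith
  set φ := fun σ => s σ * K (t - σ)
  have hKt : LipschitzWith LK fun σ => K (t - σ) :=
    .of_dist_le_mul fun x y => (hLK.dist_le_mul _ _).trans_eq (by rw [dist_sub_left])
  have hφ : LipschitzWith L φ := hs.mul_of_norm_le hKt (fun x => (hMs x).1) (fun x => hMK _)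
  have hβN : IntervalIntegrable (fun u => β (N * u)) volume (t - k) t :=
    intervalIntegrable_const.mono_fun' (hβm.comp (measurable_const_mul N)).aestronglyMeasurable
      (ae_of_all _ fun u => hMβ (N * u))
  calc |∫ σ, β (N * σ) * s σ * K (t - σ)| = |∫ σ in t - k..t, φ σ * β (N * σ)| := by
        rw [integral_mul_comp_sub_eq_intervalIntegral hk.le hKsupp]
        congr 1
        exact intervalIntegral.integral_congr fun σ _ => by simp only [φ]; ring
    _ = |∫ σ in t - k..t, deriv φ σ * ∫ u in t - k..σ, β (N * u)| := by
        rw [integral_mul_eq_neg_integral_deriv_mul_primitive hβN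
          hφ.lipschitzOnWith.absolutelyContinuousOnInterval (by simp [φ, hKk])
          (by simp [φ, hK0]), abs_neg]
    _ ≤ L * (2 * MB / N) * |t - (t - k)| := by
        rw [← Real.norm_eq_abs]
        refine intervalIntegral.norm_integral_le_of_norm_le_const fun σ _ => ?_
        rw [norm_mul]
        exact mul_le_mul (norm_deriv_le_of_lipschitz hφ)
          (abs_integral_comp_mul_left_le hβ hB1 hMB hN0 _ _) (norm_nonneg _) L.coe_nonneg
    _ = L * (2 * MB) * k / N := by rw [sub_sub_cancel, abs_of_pos hk]; ring

/-- First-order error estimate: a single integration by parts together with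
boundedness of the zero-mean primitive `B1` yields `I_N(t) = O(1/N)` uniformly
in `t ≥ 0`. -/
theorem first_order_error_estimate
    (β B1 : ℝ → ℝ)
    (hβm : Measurable β) (hβb : ∃ M : ℝ, ∀ x : ℝ, |β x| ≤ M)
    (hB1 : ∀ x : ℝ, B1 x = B1 0 + ∫ σ in (0:ℝ)..x, β σ)
    (hB1b : ∃ M : ℝ, ∀ x : ℝ, |B1 x| ≤ M)
    (hB1mean : Tendsto (fun T : ℝ => (1 / T) * ∫ x in (0:ℝ)..T, B1 x) atTop (nhds 0))
    (k : ℝ) (hk : 0 < k)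
    (K : ℝ → ℝ) (hK : ContDiff ℝ 1 K)
    (hKsupp : Function.support K ⊆ Set.Icc 0 k)
    (hK0 : K 0 = 0) (hKk : K k = 0)
    (s s' : ℝ → ℝ)
    (hsb : ∃ M : ℝ, ∀ x : ℝ, |s x| ≤ M ∧ |s' x| ≤ M)
    (hsAC : ∀ x y : ℝ, s y = s x + ∫ σ in x..y, s' σ) :
    ∃ C : ℝ, ∀ N : ℝ, 1 ≤ N → ∀ t : ℝ, 0 ≤ t →
      |∫ σ : ℝ, β (N * σ) * s σ * K (t - σ)| ≤ C / N :=
  first_order_error_estimate_general β B1 hβm hβb hB1 hB1b k hk K hK hKsupp hK0 hKk s s' hsb hsAC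
end

section
/- Let g : [0,∞) → ℝ be bounded measurable with zero Cesàro mean and let f ∈ L¹[0,∞). Then for fixed f, the function N ↦ ∫₀^∞ g(Nt) f(t) dt tends to 0 as N → ∞, and if additionally g is bounded by M, then |∫₀^∞ g(Nt) f(t) dt| ≤ M ‖f‖₁ for all N, giving a uniform bound independent of N. -/
open MeasureTheory Filter

section RLQAux
open Set

variable {g : ℝ → ℝ} {M : ℝ}

lemma rlq_integrableOn (hgm : Measurable g) (hgb : ∀ x : ℝ, 0 ≤ x → |g x| ≤ M)
    {N : ℝ} (hN : 0 ≤ N) {A : Set ℝ} (hA : MeasurableSet A) (hA0 : A ⊆ Set.Ici 0)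
    {f : ℝ → ℝ} (hf : IntegrableOn f A) :
    IntegrableOn (fun x => g (N * x) * f x) A := by
  apply Integrable.mono' (hf.norm.const_mul M)
  · exact ((hgm.comp (measurable_const_mul N)).aestronglyMeasurable).mul hf.1
  · rw [ae_restrict_iff' hA]
    filter_upwards with x hx
    have h0 : 0 ≤ N * x := mul_nonneg hN (hA0 hx)
    have hb := hgb _ h0
    rw [norm_mul, Real.norm_eq_abs, Real.norm_eq_abs]
    exact mul_le_mul_of_nonneg_right hb (abs_nonneg _)

lemma rlq_intervalIntegrable (hgm : Measurable g) (hgb : ∀ x : ℝ, 0 ≤ x → |g x| ≤ M)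
    {a b : ℝ} (ha : 0 ≤ a) (hb : 0 ≤ b) :
    IntervalIntegrable g volume a b := by
  rw [intervalIntegrable_iff]
  have hmaj : IntegrableOn (fun _ : ℝ => M) (Set.uIoc a b) := by
    rw [Set.uIoc]
    exact integrableOn_const measure_Ioc_lt_top.ne
  apply Integrable.mono' hmaj hgm.aestronglyMeasurable
  rw [ae_restrict_iff' measurableSet_uIoc]
  filter_upwards with x hx
  rw [Real.norm_eq_abs]
  exact hgb x (le_of_lt (lt_of_le_of_lt (le_min ha hb) hx.1))

lemma rlq_cesaro
    (hgmean : Tendsto (fun T : ℝ => (1 / T) * ∫ x in (0:ℝ)..T, g x) atTop (nhds 0))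
    {c : ℝ} (hc : 0 ≤ c) :
    Tendsto (fun N : ℝ => N⁻¹ * ∫ x in (0:ℝ)..(N * c), g x) atTop (nhds 0) := by
  rcases hc.eq_or_lt with h | h
  · simp [← h]
  · have h1 : Tendsto (fun N : ℝ => N * c) atTop atTop :=
      Tendsto.atTop_mul_const h tendsto_id
    have h2 := hgmean.comp h1
    have h3 := h2.const_mul c
    rw [mul_zero] at h3
    apply h3.congr'
    filter_upwards [eventually_gt_atTop (0:ℝ)] with N hN
    have hNc : N * c ≠ 0 := by positivity
    simp only [Function.comp_apply, one_div]
    rw [← mul_assoc]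
    congr 1
    field_simp

lemma rlq_interval (hgm : Measurable g) (hgb : ∀ x : ℝ, 0 ≤ x → |g x| ≤ M)
    (hgmean : Tendsto (fun T : ℝ => (1 / T) * ∫ x in (0:ℝ)..T, g x) atTop (nhds 0))
    {a b : ℝ} (ha : 0 ≤ a) (hab : a ≤ b) :
    Tendsto (fun N : ℝ => ∫ x in Set.Ioc a b, g (N * x)) atTop (nhds 0) := by
  have hb : 0 ≤ b := ha.trans hab
  have key := (rlq_cesaro hgmean hb).sub (rlq_cesaro hgmean ha)
  rw [sub_zero] at key
  apply key.congr'
  filter_upwards [eventually_gt_atTop (0:ℝ)] with N hN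
  have h1 : ∫ x in Set.Ioc a b, g (N * x) = ∫ x in a..b, g (N * x) :=
    (intervalIntegral.integral_of_le hab).symm
  have hia : IntervalIntegrable g volume 0 (N * a) :=
    rlq_intervalIntegrable hgm hgb le_rfl (by positivity)
  have hib : IntervalIntegrable g volume 0 (N * b) :=
    rlq_intervalIntegrable hgm hgb le_rfl (by positivity)
  rw [h1, intervalIntegral.integral_comp_mul_left g hN.ne',
    ← intervalIntegral.integral_interval_sub_left hib hia, smul_eq_mul, mul_sub]

lemma rlq_bound (hgm : Measurable g) (hgb : ∀ x : ℝ, 0 ≤ x → |g x| ≤ M)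
    {N : ℝ} (hN : 0 ≤ N) {f : ℝ → ℝ} (hf : IntegrableOn f (Set.Ioi (0:ℝ))) :
    |∫ x in Set.Ioi (0:ℝ), g (N * x) * f x| ≤ M * ∫ x in Set.Ioi (0:ℝ), |f x| := by
  have hint := rlq_integrableOn hgm hgb hN measurableSet_Ioi
    (fun x hx => le_of_lt (Set.mem_Ioi.1 hx)) hf
  calc |∫ x in Set.Ioi (0:ℝ), g (N * x) * f x|
      ≤ ∫ x in Set.Ioi (0:ℝ), ‖g (N * x) * f x‖ := by
        rw [← Real.norm_eq_abs]; exact norm_integral_le_integral_norm _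
    _ ≤ ∫ x in Set.Ioi (0:ℝ), M * |f x| := by
        apply integral_mono_ae hint.norm (hf.norm.const_mul M)
        apply (ae_restrict_iff' measurableSet_Ioi).2
        filter_upwards with x hx
        have hb := hgb _ (mul_nonneg hN (le_of_lt hx))
        rw [norm_mul, Real.norm_eq_abs, Real.norm_eq_abs]
        exact mul_le_mul_of_nonneg_right hb (abs_nonneg _)
    _ = M * ∫ x in Set.Ioi (0:ℝ), |f x| := MeasureTheory.integral_const_mul M _

set_option maxHeartbeats 1000000 in
lemma rlq_tendsto_step (hgm : Measurable g) (hgb : ∀ x : ℝ, 0 ≤ x → |g x| ≤ M)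
    (hgmean : Tendsto (fun T : ℝ => (1 / T) * ∫ x in (0:ℝ)..T, g x) atTop (nhds 0))
    {φ : ℝ → ℝ} (hφ : Continuous φ) {δ : ℝ} (hδ : 0 < δ) (K : ℕ)
    (hsupp : ∀ x : ℝ, (K : ℝ) * δ ≤ x → φ (δ * ⌊x / δ⌋) = 0) :
    Tendsto (fun N : ℝ => ∫ x in Set.Ioi (0:ℝ), g (N * x) * φ (δ * ⌊x / δ⌋))
      atTop (nhds 0) := by
  have key : Tendsto (fun N : ℝ => ∑ k ∈ Finset.range K,
      φ (δ * k) * ∫ x in Set.Ioc (δ * k) (δ * ((k : ℝ) + 1)), g (N * x))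
      atTop (nhds 0) := by
    have h := tendsto_finset_sum (Finset.range K) (fun k (_ : k ∈ Finset.range K) =>
      ((rlq_interval hgm hgb hgmean (by positivity)
        (mul_le_mul_of_nonneg_left (by linarith : (k:ℝ) ≤ (k:ℝ)+1) hδ.le)).const_mul
        (φ (δ * k))))
    simpa using h
  apply key.congr'
  filter_upwards [eventually_ge_atTop (0:ℝ)] with N hN
  set s : ℝ → ℝ := fun x => φ (δ * ⌊x / δ⌋) with hs_def
  have hsm : Measurable s := by
    have h1 : Measurable fun x : ℝ => ⌊x / δ⌋ := (measurable_id.div_const δ).floor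
    exact (measurable_from_top (f := fun n : ℤ => φ (δ * n))).comp h1
  set B := (K : ℝ) * δ with hB_def
  have hB0 : 0 ≤ B := by positivity
  obtain ⟨C, hC⟩ :=
    (isCompact_Icc (a := (0:ℝ)) (b := B)).exists_bound_of_continuousOn hφ.continuousOn
  have hsb : ∀ x : ℝ, 0 ≤ x → x ≤ B → ‖s x‖ ≤ C := by
    intro x hx0 hxB
    apply hC
    constructor
    · have h2 : (0:ℤ) ≤ ⌊x / δ⌋ := Int.floor_nonneg.2 (div_nonneg hx0 hδ.le)
      have : (0:ℝ) ≤ (⌊x / δ⌋ : ℝ) := by exact_mod_cast h2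
      positivity
    · have h1 : δ * ⌊x / δ⌋ ≤ x := by
        calc δ * (⌊x / δ⌋ : ℝ) ≤ δ * (x / δ) :=
              mul_le_mul_of_nonneg_left (Int.floor_le (x / δ)) hδ.le
          _ = x := by field_simp
      exact h1.trans hxB
  have hsint : ∀ a b : ℝ, 0 ≤ a → b ≤ B → IntegrableOn s (Set.Ioc a b) := by
    intro a b ha hb
    have hmaj : IntegrableOn (fun _ : ℝ => C) (Set.Ioc a b) :=
      integrableOn_const measure_Ioc_lt_top.ne
    apply Integrable.mono' hmaj hsm.aestronglyMeasurable
    apply (ae_restrict_iff' measurableSet_Ioc).2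
    filter_upwards with x hx
    exact hsb x (ha.trans hx.1.le) (hx.2.trans hb)
  have hgint : ∀ a b : ℝ, 0 ≤ a → b ≤ B →
      IntegrableOn (fun x => g (N * x) * s x) (Set.Ioc a b) := fun a b ha hb =>
    rlq_integrableOn hgm hgb hN measurableSet_Ioc (fun x hx => ha.trans hx.1.le)
      (hsint a b ha hb)
  have hzero : Set.EqOn (fun x => g (N * x) * s x) 0 (Set.Ioi B) := by
    intro x hx
    have := hsupp x (le_of_lt hx)
    simp only [hs_def, Pi.zero_apply]
    rw [this, mul_zero]
  have hsplit : ∫ x in Set.Ioi (0:ℝ), g (N * x) * s x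
      = ∫ x in Set.Ioc 0 B, g (N * x) * s x := by
    rw [← Set.Ioc_union_Ioi_eq_Ioi hB0,
      setIntegral_union (Set.Ioc_disjoint_Ioi le_rfl) measurableSet_Ioi
        (hgint 0 B le_rfl le_rfl)
        ((integrableOn_congr_fun hzero measurableSet_Ioi).2 (integrableOn_zero)),
      setIntegral_congr_fun measurableSet_Ioi hzero]
    simp
  have hadj : ∑ k ∈ Finset.range K,
        ∫ x in (δ * (k:ℝ))..(δ * ((k:ℕ)+1 : ℕ)), g (N * x) * s x
      = ∫ x in (δ * ((0:ℕ):ℝ))..(δ * (K:ℝ)), g (N * x) * s x := by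
    apply intervalIntegral.sum_integral_adjacent_intervals
      (a := fun k : ℕ => δ * (k : ℝ))
    intro k hk
    rw [intervalIntegrable_iff, Set.uIoc_of_le
      (mul_le_mul_of_nonneg_left (by exact_mod_cast Nat.le_succ k) hδ.le)]
    apply hgint _ _ (by positivity)
    rw [hB_def, mul_comm]
    apply mul_le_mul_of_nonneg_right _ hδ.le
    exact_mod_cast Nat.succ_le_of_lt hk
  push_cast at hadj
  have hblock : ∀ k : ℕ, ∫ x in Set.Ioc (δ * (k:ℝ)) (δ * ((k:ℝ)+1)), g (N * x) * s x
      = φ (δ * k) * ∫ x in Set.Ioc (δ * (k:ℝ)) (δ * ((k:ℝ)+1)), g (N * x) := by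
    intro k
    rw [← MeasureTheory.integral_const_mul]
    rw [show (volume.restrict (Set.Ioc (δ * (k:ℝ)) (δ * ((k:ℝ)+1))))
        = volume.restrict (Set.Ioo (δ * (k:ℝ)) (δ * ((k:ℝ)+1))) from
      (restrict_Ioo_eq_restrict_Ioc).symm]
    apply setIntegral_congr_fun measurableSet_Ioo
    intro x hx
    have hfl : ⌊x / δ⌋ = (k : ℤ) := by
      rw [Int.floor_eq_iff]
      constructor
      · push_cast
        rw [le_div_iff₀ hδ]
        linarith [hx.1]
      · push_cast
        rw [div_lt_iff₀ hδ]
        linarith [hx.2]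
    simp only [hs_def, hfl]
    push_cast
    ring
  calc (∑ k ∈ Finset.range K,
        φ (δ * k) * ∫ x in Set.Ioc (δ * k) (δ * ((k : ℝ) + 1)), g (N * x))
      = ∑ k ∈ Finset.range K, ∫ x in (δ * (k:ℝ))..(δ * ((k:ℝ)+1)), g (N * x) * s x := by
        apply Finset.sum_congr rfl
        intro k _
        rw [intervalIntegral.integral_of_le
          (mul_le_mul_of_nonneg_left (by linarith : (k:ℝ) ≤ (k:ℝ)+1) hδ.le), hblock k]
    _ = ∫ x in (δ * ((0:ℕ):ℝ))..(δ * (K:ℝ)), g (N * x) * s x := by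
        push_cast
        exact hadj
    _ = ∫ x in Set.Ioi (0:ℝ), g (N * x) * s x := by
        rw [hsplit]
        norm_num
        rw [intervalIntegral.integral_of_le (by positivity), hB_def, mul_comm]

set_option maxHeartbeats 1000000 in
lemma rlq_approx (hgm : Measurable g) (hgb : ∀ x : ℝ, 0 ≤ x → |g x| ≤ M)
    (hgmean : Tendsto (fun T : ℝ => (1 / T) * ∫ x in (0:ℝ)..T, g x) atTop (nhds 0))
    {f : ℝ → ℝ} (hf : IntegrableOn f (Set.Ioi (0:ℝ))) {ε : ℝ} (hε : 0 < ε) :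
    ∃ s : ℝ → ℝ, IntegrableOn s (Set.Ioi (0:ℝ)) ∧
      Tendsto (fun N : ℝ => ∫ x in Set.Ioi (0:ℝ), g (N * x) * s x) atTop (nhds 0) ∧
      ∫ x in Set.Ioi (0:ℝ), |f x - s x| ≤ ε := by
  classical
  set F : ℝ → ℝ := (Set.Ioi (0:ℝ)).indicator f with hF_def
  have hF : Integrable F := (integrable_indicator_iff measurableSet_Ioi).2 hf
  obtain ⟨φ, hφsupp, hφle, hφcont, hφint⟩ :=
    hF.exists_hasCompactSupport_integral_sub_le (half_pos hε)
  obtain ⟨r, hr⟩ := hφsupp.isBounded.subset_closedBall (0:ℝ)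
  set R : ℝ := |r| with hR_def
  have hR0 : 0 ≤ R := abs_nonneg r
  have hφR : ∀ x : ℝ, R < x → φ x = 0 := by
    intro x hx
    apply image_eq_zero_of_notMem_tsupport
    intro hmem
    have := hr hmem
    rw [Real.closedBall_eq_Icc] at this
    have h2 : x ≤ |r| := le_trans this.2 (by simp [le_abs_self])
    linarith
  have hRpos : (0:ℝ) < 2 * (R + 2) := by linarith
  set ε'' : ℝ := ε / (2 * (R + 2)) with hε''_def
  have hε''pos : 0 < ε'' := div_pos hε hRpos
  have huc := hφsupp.uniformContinuous_of_continuous hφcont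
  rw [Metric.uniformContinuous_iff] at huc
  obtain ⟨δ0, hδ0, hδ0'⟩ := huc ε'' hε''pos
  set δ : ℝ := min δ0 1 with hδ_def
  have hδ : 0 < δ := lt_min hδ0 one_pos
  have hδ1 : δ ≤ 1 := min_le_right _ _
  have hδδ0 : δ ≤ δ0 := min_le_left _ _
  set K : ℕ := ⌈(R + 1) / δ⌉₊ with hK_def
  have hK1 : R + 1 ≤ (K : ℝ) * δ := by
    have h := Nat.le_ceil ((R + 1) / δ)
    exact (div_le_iff₀ hδ).1 h
  have hK2 : (K : ℝ) * δ ≤ R + 2 := by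
    have h : ((K : ℝ)) < (R + 1) / δ + 1 :=
      Nat.ceil_lt_add_one (by positivity)
    have h2 : (K : ℝ) * δ < ((R + 1) / δ + 1) * δ :=
      mul_lt_mul_of_pos_right h hδ
    rw [add_mul, div_mul_cancel₀ _ hδ.ne'] at h2
    linarith
  set B : ℝ := (K : ℝ) * δ with hB_def
  have hB0 : 0 ≤ B := by positivity
  set s : ℝ → ℝ := fun x => φ (δ * ⌊x / δ⌋) with hs_def
  have hsm : Measurable s := by
    have h1 : Measurable fun x : ℝ => ⌊x / δ⌋ := (measurable_id.div_const δ).floor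
    exact (measurable_from_top (f := fun n : ℤ => φ (δ * n))).comp h1
  have hfloor : ∀ x : ℝ, x - δ < δ * ⌊x / δ⌋ ∧ δ * (⌊x / δ⌋ : ℝ) ≤ x := by
    intro x
    constructor
    · have h := Int.sub_one_lt_floor (x / δ)
      have h2 : δ * (x / δ - 1) < δ * ⌊x / δ⌋ := (mul_lt_mul_iff_right₀ hδ).2 h
      have h3 : δ * (x / δ - 1) = x - δ := by field_simp
      linarith
    · calc δ * (⌊x / δ⌋ : ℝ) ≤ δ * (x / δ) :=
          mul_le_mul_of_nonneg_left (Int.floor_le (x / δ)) hδ.le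
        _ = x := by field_simp
  have hclose : ∀ x : ℝ, |φ x - s x| < ε'' := by
    intro x
    have h := hfloor x
    obtain ⟨ha, hb⟩ := h
    have hd : dist x (δ * ⌊x / δ⌋) < δ0 := by
      rw [Real.dist_eq, abs_lt]
      constructor
      · linarith
      · linarith
    have := hδ0' hd
    rwa [Real.dist_eq] at this
  have hs0 : ∀ x : ℝ, B ≤ x → s x = 0 := by
    intro x hx
    apply hφR
    have h := (hfloor x).1
    have : R + 1 - δ ≤ x - δ := by linarith [hK1]
    have : R ≤ x - δ := by linarith [hδ1]
    linarith
  have hφ0 : ∀ x : ℝ, B < x → φ x = 0 := fun x hx => hφR x (by linarith [hK1, hδ1])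
  -- bound for s on [0, B]
  obtain ⟨C, hC⟩ :=
    (isCompact_Icc (a := (0:ℝ)) (b := B)).exists_bound_of_continuousOn hφcont.continuousOn
  have hsb : ∀ x : ℝ, 0 ≤ x → x ≤ B → ‖s x‖ ≤ C := by
    intro x hx0 hxB
    apply hC
    constructor
    · have h2 : (0:ℤ) ≤ ⌊x / δ⌋ := Int.floor_nonneg.2 (div_nonneg hx0 hδ.le)
      have : (0:ℝ) ≤ (⌊x / δ⌋ : ℝ) := by exact_mod_cast h2
      positivity
    · exact (hfloor x).2.trans hxB
  have hC0 : 0 ≤ C := le_trans (norm_nonneg _) (hC 0 ⟨le_rfl, hB0⟩)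
  have hsint : IntegrableOn s (Set.Ioi (0:ℝ)) := by
    have hmaj : Integrable ((Set.Ioc (0:ℝ) B).indicator (fun _ => C)) :=
      (integrable_indicator_iff measurableSet_Ioc).2
        (integrableOn_const measure_Ioc_lt_top.ne)
    apply Integrable.mono' hmaj.restrict hsm.aestronglyMeasurable
    apply (ae_restrict_iff' measurableSet_Ioi).2
    filter_upwards with x hx
    by_cases hxB : x ≤ B
    · rw [Set.indicator_of_mem (Set.mem_Ioc.2 ⟨hx, hxB⟩)]
      exact hsb x (le_of_lt hx) hxB
    · rw [hs_def]
      have : s x = 0 := hs0 x (le_of_lt (not_le.1 hxB))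
      rw [hs_def] at this
      rw [this, Set.indicator_of_notMem (fun hmem => hxB hmem.2)]
      simp
  refine ⟨s, hsint, ?_, ?_⟩
  · exact rlq_tendsto_step hgm hgb hgmean hφcont hδ K (fun x hx => hs0 x hx)
  · -- the L¹ estimate
    have hφIoi : IntegrableOn φ (Set.Ioi (0:ℝ)) := hφint.integrableOn
    have h1 : ∫ x in Set.Ioi (0:ℝ), |f x - φ x| ≤ ε / 2 := by
      have heq : ∫ x in Set.Ioi (0:ℝ), |f x - φ x|
          = ∫ x in Set.Ioi (0:ℝ), ‖F x - φ x‖ := by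
        apply setIntegral_congr_fun measurableSet_Ioi
        intro x hx
        simp only [hF_def, Set.indicator_of_mem hx, Real.norm_eq_abs]
      rw [heq]
      calc ∫ x in Set.Ioi (0:ℝ), ‖F x - φ x‖
          ≤ ∫ x, ‖F x - φ x‖ :=
            setIntegral_le_integral (hF.sub hφint).norm
              (Filter.Eventually.of_forall fun x => norm_nonneg _)
        _ ≤ ε / 2 := hφle
    have h2 : ∫ x in Set.Ioi (0:ℝ), |φ x - s x| ≤ ε'' * (R + 2) := by
      have hmono : ∫ x in Set.Ioi (0:ℝ), |φ x - s x|
          ≤ ∫ x in Set.Ioi (0:ℝ), (Set.Ioc (0:ℝ) B).indicator (fun _ => ε'') x := by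
        apply setIntegral_mono_on
          (show IntegrableOn (fun x => |φ x - s x|) (Set.Ioi (0:ℝ)) volume from
            (hφIoi.sub hsint).abs)
          ((integrable_indicator_iff measurableSet_Ioc).2
            (integrableOn_const measure_Ioc_lt_top.ne)).restrict
          measurableSet_Ioi
        intro x hx
        by_cases hxB : x ≤ B
        · rw [Set.indicator_of_mem (Set.mem_Ioc.2 ⟨hx, hxB⟩)]
          exact (hclose x).le
        · push_neg at hxB
          rw [Set.indicator_of_notMem (fun hmem => hxB.not_ge (Set.mem_Ioc.1 hmem).2)]
          rw [hφ0 x hxB, hs0 x hxB.le]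
          simp
      have heval : ∫ x in Set.Ioi (0:ℝ), (Set.Ioc (0:ℝ) B).indicator (fun _ => ε'') x
          = ε'' * B := by
        rw [setIntegral_indicator measurableSet_Ioc,
          Set.inter_eq_self_of_subset_right Set.Ioc_subset_Ioi_self,
          setIntegral_const, measureReal_def, Real.volume_Ioc, smul_eq_mul]
        rw [ENNReal.toReal_ofReal (by linarith)]
        ring
      rw [heval] at hmono
      calc ∫ x in Set.Ioi (0:ℝ), |φ x - s x| ≤ ε'' * B := hmono
        _ ≤ ε'' * (R + 2) := mul_le_mul_of_nonneg_left hK2 hε''pos.le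
    have htri : ∫ x in Set.Ioi (0:ℝ), |f x - s x|
        ≤ (∫ x in Set.Ioi (0:ℝ), |f x - φ x|) + ∫ x in Set.Ioi (0:ℝ), |φ x - s x| := by
      have hi1 : IntegrableOn (fun x => |f x - φ x|) (Set.Ioi (0:ℝ)) volume :=
        (hf.sub hφIoi).abs
      have hi2 : IntegrableOn (fun x => |φ x - s x|) (Set.Ioi (0:ℝ)) volume :=
        (hφIoi.sub hsint).abs
      have hi3 : IntegrableOn (fun x => |f x - s x|) (Set.Ioi (0:ℝ)) volume :=
        (hf.sub hsint).abs
      rw [← integral_add hi1 hi2]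
      apply integral_mono_ae hi3 (hi1.add hi2)
      filter_upwards with x
      exact abs_sub_le _ _ _
    have hfin : ε'' * (R + 2) = ε / 2 := by
      rw [hε''_def]
      field_simp
    linarith

end RLQAux

/-- Quantitative companion to the zero-mean Riemann–Lebesgue lemma: the integral
tends to `0` and is uniformly bounded by `M ‖f‖₁`. -/
theorem riemann_lebesgue_quantitative
    (g : ℝ → ℝ) (M : ℝ)
    (hgm : Measurable g) (hgb : ∀ x : ℝ, 0 ≤ x → |g x| ≤ M)
    (hgmean : Tendsto (fun T : ℝ => (1 / T) * ∫ x in (0:ℝ)..T, g x) atTop (nhds 0))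
    (f : ℝ → ℝ) (hf : IntegrableOn f (Set.Ioi (0:ℝ))) :
    Tendsto (fun N : ℝ => ∫ x in Set.Ioi (0:ℝ), g (N * x) * f x) atTop (nhds 0) ∧
    ∀ N : ℝ, 0 ≤ N →
      |∫ x in Set.Ioi (0:ℝ), g (N * x) * f x| ≤ M * ∫ x in Set.Ioi (0:ℝ), |f x| := by
  have hM0 : 0 ≤ M := le_trans (abs_nonneg _) (hgb 0 le_rfl)
  constructor
  · rw [NormedAddCommGroup.tendsto_nhds_zero]
    intro ε hε
    have hM1 : (0:ℝ) < 2 * (M + 1) := by linarith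
    obtain ⟨s, hsint, hstend, hsapp⟩ :=
      rlq_approx hgm hgb hgmean hf (div_pos hε hM1)
    have h1 := (NormedAddCommGroup.tendsto_nhds_zero.1 hstend) (ε / 2) (half_pos hε)
    filter_upwards [h1, eventually_ge_atTop (0:ℝ)] with N hN1 hN0
    have hint1 := rlq_integrableOn hgm hgb hN0 measurableSet_Ioi
      (fun x hx => le_of_lt (Set.mem_Ioi.1 hx)) hf
    have hint2 := rlq_integrableOn hgm hgb hN0 measurableSet_Ioi
      (fun x hx => le_of_lt (Set.mem_Ioi.1 hx)) hsint
    have hdiff : (∫ x in Set.Ioi (0:ℝ), g (N * x) * f x)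
          - (∫ x in Set.Ioi (0:ℝ), g (N * x) * s x)
        = ∫ x in Set.Ioi (0:ℝ), g (N * x) * (f x - s x) := by
      rw [← integral_sub hint1 hint2]
      apply setIntegral_congr_fun measurableSet_Ioi
      intro x _
      simp only
      ring
    have hb2' : |∫ x in Set.Ioi (0:ℝ), g (N * x) * (f x - s x)| ≤
        M * ∫ x in Set.Ioi (0:ℝ), |f x - s x| :=
      rlq_bound hgm hgb hN0 (f := fun x => f x - s x) (hf.sub hsint)
    have h3 : M * ∫ x in Set.Ioi (0:ℝ), |f x - s x| ≤ M * (ε / (2 * (M + 1))) :=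
      mul_le_mul_of_nonneg_left hsapp hM0
    have h4 : M * (ε / (2 * (M + 1))) ≤ ε / 2 := by
      rw [mul_div_assoc', div_le_div_iff₀ hM1 (by norm_num : (0:ℝ) < 2)]
      nlinarith
    set A := ∫ x in Set.Ioi (0:ℝ), g (N * x) * f x
    set Bv := ∫ x in Set.Ioi (0:ℝ), g (N * x) * s x
    have hkey : ‖A‖ ≤ ‖A - Bv‖ + ‖Bv‖ := by
      calc ‖A‖ = ‖(A - Bv) + Bv‖ := by rw [sub_add_cancel]
        _ ≤ ‖A - Bv‖ + ‖Bv‖ := norm_add_le _ _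
    have hAB : ‖A - Bv‖ ≤ ε / 2 := by
      rw [hdiff, Real.norm_eq_abs]
      linarith
    linarith [hkey, hAB, hN1]
  · intro N hN
    exact rlq_bound hgm hgb hN hf
end
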